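/- arXiv:2406.12989 — 4 statements merged into one kernel-verified Lean document; each statement's English description precedes it below -/
import Mathlib

section
/- Let d ≥ 1 be an integer and let T be the complete binary tree (q = 2) of depth d. Then (d − log₂(d) − 3 − log₂(3))/2 ≤ Φ_V(T) ≤ ⌈d/2⌉. -/
open scoped Classical

/-- A vertex of the complete `q`-ary tree of depth `d`: a sequence over `Fin q`
of length at most `d`. -/
def QV (q d : ℕ) : Type := {l : List (Fin q) // l.length ≤ d}

instance (q d : ℕ) : Finite (QV q d) :=
  (List.finite_length_le (Fin q) d).to_subtype

/-- The complete `q`-ary tree of depth `d`: two vertices are adjacent exactly when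
one is obtained from the other by appending a single element. -/
def qTree (q d : ℕ) : SimpleGraph (QV q d) where
  Adj u v := (∃ a : Fin q, v.val = u.val ++ [a]) ∨ (∃ a : Fin q, u.val = v.val ++ [a])
  symm := by constructor; intro u v h; tauto
  loopless := by
    constructor
    rintro u (⟨a, ha⟩ | ⟨a, ha⟩) <;>
    · have := congrArg List.length ha
      simp at this

/-- The vertex border `δ(S)`: vertices outside `S` with a neighbour in `S`. -/
def vertexBorder {V : Type*} (G : SimpleGraph V) (S : Set V) : Set V :=
  {v | v ∉ S ∧ ∃ u ∈ S, G.Adj u v}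

/-- `Φ_V(G, s)`: the minimum border size over vertex sets of size `s`. -/
noncomputable def isoProfile {V : Type*} (G : SimpleGraph V) (s : ℕ) : ℕ :=
  sInf ((fun S => (vertexBorder G S).ncard) '' {S : Set V | S.ncard = s})

/-- `Φ_V(G)`: the vertex-isoperimetric peak, `max_{0 ≤ s ≤ |V|} Φ_V(G, s)`. -/
noncomputable def isoPeak {V : Type*} (G : SimpleGraph V) : ℕ :=
  sSup (isoProfile G '' Set.Icc 0 (Nat.card V))

/-- The vertex separation number: for each linear layout (a bijection from the
vertices to `{1, …, |V|}`, here modelled as `V ≃ Fin |V|`) take the maximum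
border size of its prefix sets, then minimize over layouts. -/
noncomputable def vsNum {V : Type*} (G : SimpleGraph V) : ℕ :=
  sInf {n | ∃ L : V ≃ Fin (Nat.card V),
    n = sSup {m | ∃ i : Fin (Nat.card V),
      m = (vertexBorder G {u | (L u : ℕ) ≤ (i : ℕ)}).ncard}}

namespace QV

variable {q d : ℕ}

/-- Level `i`: vertices at distance `i` from the root. -/
def level (q d : ℕ) (i : ℕ) : Set (QV q d) := {w | w.val.length = i}

/-- Descendants of `u` (including `u` itself). -/
def desc (u : QV q d) : Set (QV q d) := {w | u.val <+: w.val}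

/-- `w` is a child of `u`. -/
def IsChildOf (w u : QV q d) : Prop := ∃ a : Fin q, w.val = u.val ++ [a]

/-- `u` is to the left of `v`: same level and lexicographically smaller. -/
def LeftOf (u v : QV q d) : Prop :=
  u.val.length = v.val.length ∧ List.Lex (· < ·) u.val v.val

/-- `u` precedes `v` in the breadth-first ordering of the tree. -/
def Precedes (u v : QV q d) : Prop :=
  u.val.length < v.val.length ∨
    (u.val.length = v.val.length ∧ List.Lex (· < ·) u.val v.val)

/-- `u, v` are swappable in `S`. -/
def Swappable (S : Set (QV q d)) (u v : QV q d) : Prop :=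
  LeftOf u v ∧ ((u ∉ S ∧ v ∈ S) ∨
    (u ∉ S ∧ v ∉ S ∧ (∀ w, IsChildOf w u → w ∉ S) ∧ (∃ w, IsChildOf w v ∧ w ∈ S)))

/-- Level `i` of `S` is left-ordered: no swappable pair in level `i`. -/
def LevelLeftOrdered (S : Set (QV q d)) (i : ℕ) : Prop :=
  ∀ u v : QV q d, u.val.length = i → ¬ Swappable S u v

/-- `S` is left-ordered: every level is left-ordered. -/
def LeftOrdered (S : Set (QV q d)) : Prop := ∀ i, LevelLeftOrdered S i

/-- The canonical map used in a treeswap between `u` and `v`: a descendant of `u`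
is sent to the corresponding descendant of `v` (same suffix), and vice versa;
other vertices are fixed. -/
noncomputable def swapAt (u v w : QV q d) : QV q d :=
  if h : u.val <+: w.val ∧ (v.val ++ w.val.drop u.val.length).length ≤ d then
    ⟨v.val ++ w.val.drop u.val.length, h.2⟩
  else if h' : v.val <+: w.val ∧ (u.val ++ w.val.drop v.val.length).length ≤ d then
    ⟨u.val ++ w.val.drop v.val.length, h'.2⟩
  else w

/-- The treeswap of `S` between `u` and `v`. -/
noncomputable def treeswap (S : Set (QV q d)) (u v : QV q d) : Set (QV q d) :=
  {w | swapAt u v w ∈ S}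

/-- The strict partial order `A < B` on subsets of the tree. -/
def SetPrec (A B : Set (QV q d)) : Prop :=
  (∀ i, (A ∩ level q d i).ncard = (B ∩ level q d i).ncard) ∧
  ∃ v, v ∈ A ∧ v ∉ B ∧ ∀ w, Precedes w v → (w ∈ A ↔ w ∈ B)

/-- `S` is down-compressed. -/
def DownCompressed (S : Set (QV q d)) : Prop :=
  ∀ u ∈ S, ∀ v ∉ S,
    (vertexBorder (qTree q d) S).ncard ≤
      (vertexBorder (qTree q d) ((S ∪ {v}) \ {u})).ncard ∧
    (u.val.length < v.val.length →
      (vertexBorder (qTree q d) S).ncard <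
        (vertexBorder (qTree q d) ((S ∪ {v}) \ {u})).ncard)

/-- `S'` is an aeolian compression of `S`. -/
def IsAeolianCompression (S S' : Set (QV q d)) : Prop :=
  ∃ u v : QV q d, LeftOf u v ∧
    ∃ R A : Set (QV q d), R.Nonempty ∧ R ⊆ S ∧ R ⊆ desc v ∧
      A ⊆ desc u ∧ Disjoint A S ∧ A.ncard = R.ncard ∧
      S' = (S \ R) ∪ A ∧
      S'.ncard = S.ncard ∧
      (vertexBorder (qTree q d) S').ncard ≤ (vertexBorder (qTree q d) S).ncard

/-- `S` is aeolian-compressed. -/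
def AeolianCompressed (S : Set (QV q d)) : Prop :=
  LeftOrdered S ∧ DownCompressed S ∧ ∀ S', ¬ IsAeolianCompression S S'

end QV

/-!
Upper bound: sets of every size with at most `⌈d/2⌉` border vertices are built recursively,
descending two levels at a time and filling the subtrees of the four grandchildren from left to
right. The border is then the border inside the subtree being filled plus the parent of that
subtree, so two levels cost one border vertex.

Lower bound: following `S` up the tree, `|S|` is, up to an error of size at most `3|∂S| + 1`,
a sum of one term `±2ᵉ` per border vertex plus one for the root. The size `(2^(d+1) + 1) / 3`,
with alternating binary digits `1010…1(1)`, needs about `d / 2` such terms, while the error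
needs only about `log₂ (3|∂S|) / 2`; hence `|∂S| ≥ (d - log₂ d - 3 - log₂ 3) / 2`.
-/

namespace Nat

/-- The least number of terms `±2ᵉ` with sum `n` (the weight of the non-adjacent form of `n`):
an odd `2t + 1` is `2t + 1` or `2(t + 1) - 1`. -/
def nafWeight (n : ℕ) : ℕ :=
  if n ≤ 1 then n
  else if n % 2 = 0 then nafWeight (n / 2)
  else 1 + min (nafWeight (n / 2)) (nafWeight (n / 2 + 1))
termination_by n
decreasing_by all_goals omega

@[simp] theorem nafWeight_zero : nafWeight 0 = 0 := by simp [nafWeight]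

@[simp] theorem nafWeight_one : nafWeight 1 = 1 := by simp [nafWeight]

theorem nafWeight_two_mul (n : ℕ) : nafWeight (2 * n) = nafWeight n := by
  rcases Nat.eq_zero_or_pos n with rfl | hn
  · simp
  · rw [nafWeight, if_neg (by omega), if_pos (by omega), Nat.mul_div_cancel_left n two_pos]

theorem nafWeight_two_mul_add_one (t : ℕ) :
    nafWeight (2 * t + 1) = 1 + min (nafWeight t) (nafWeight (t + 1)) := by
  rcases Nat.eq_zero_or_pos t with rfl | ht
  · simp
  · rw [nafWeight, if_neg (by omega), if_neg (by omega), show (2 * t + 1) / 2 = t by omega]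

theorem nafWeight_two_pow (e : ℕ) : nafWeight (2 ^ e) = 1 := by
  induction e with
  | zero => simp
  | succ e ih => rwa [pow_succ', nafWeight_two_mul]

/-- The base-4 repunit `1 + 4 + ⋯ + 4ᵐ⁻¹ = (4ᵐ - 1) / 3`, written `1010…101` in binary. -/
def repunitFour : ℕ → ℕ
  | 0 => 0
  | m + 1 => 4 * repunitFour m + 1

theorem three_mul_repunitFour_add_one (m : ℕ) : 3 * repunitFour m + 1 = 4 ^ m := by
  induction m with
  | zero => rfl
  | succ m ih => rw [repunitFour, pow_succ]; omega

theorem le_nafWeight_repunitFour (m : ℕ) :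
    m ≤ nafWeight (repunitFour m) ∧ m + 1 ≤ nafWeight (2 * repunitFour m + 1) := by
  induction m with
  | zero => simp [repunitFour]
  | succ m ih =>
    have hodd : nafWeight (repunitFour (m + 1)) =
        1 + min (nafWeight (repunitFour m)) (nafWeight (2 * repunitFour m + 1)) := by
      rw [repunitFour, show 4 * repunitFour m + 1 = 2 * (2 * repunitFour m) + 1 by ring,
        nafWeight_two_mul_add_one, nafWeight_two_mul]
    have heven : nafWeight (2 * repunitFour (m + 1) + 1) =
        1 + min (nafWeight (repunitFour (m + 1))) (nafWeight (2 * repunitFour m + 1)) := by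
      rw [nafWeight_two_mul_add_one, repunitFour,
        show 4 * repunitFour m + 1 + 1 = 2 * (2 * repunitFour m + 1) by ring, nafWeight_two_mul]
    omega

theorem div_two_add_one_le_nafWeight (d : ℕ) : d / 2 + 1 ≤ nafWeight ((2 ^ (d + 1) + 1) / 3) := by
  obtain ⟨m, rfl | rfl⟩ := Nat.even_or_odd' d
  · have h := three_mul_repunitFour_add_one m
    have hpow : 2 ^ (2 * m + 1) = 2 * 4 ^ m := by rw [pow_succ, pow_mul]; norm_num; ring
    rw [hpow, show (2 * 4 ^ m + 1) / 3 = 2 * repunitFour m + 1 by omega]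
    have := (le_nafWeight_repunitFour m).2
    omega
  · have h := three_mul_repunitFour_add_one (m + 1)
    have hpow : 2 ^ (2 * m + 1 + 1) = 4 ^ (m + 1) := by
      rw [show 2 * m + 1 + 1 = 2 * (m + 1) by ring, pow_mul]; norm_num
    rw [hpow, show (4 ^ (m + 1) + 1) / 3 = repunitFour (m + 1) by omega]
    have := (le_nafWeight_repunitFour (m + 1)).1
    omega

theorem two_mul_nafWeight_le_log (n : ℕ) (hn : n ≠ 0) : 2 * nafWeight n ≤ Nat.log 2 n + 3 := by
  induction n using Nat.strong_induction_on with
  | _ n ih =>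
  obtain ⟨t, rfl | rfl⟩ := Nat.even_or_odd' n
  · rw [nafWeight_two_mul, Nat.log_of_one_lt_of_le one_lt_two (by omega),
      Nat.mul_div_cancel_left t two_pos]
    have := ih t (by omega) (by omega)
    omega
  rcases Nat.eq_zero_or_pos t with rfl | ht
  · simp
  have hlog : ∀ u, 0 < u → 4 * 2 ^ Nat.log 2 u ≤ 2 * t + 1 →
      Nat.log 2 u + 2 ≤ Nat.log 2 (2 * t + 1) := fun u hu h =>
    (Nat.le_log_iff_pow_le one_lt_two (by omega)).2 (by rw [pow_add]; omega)
  rw [nafWeight_two_mul_add_one]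
  obtain ⟨u, rfl | rfl⟩ := Nat.even_or_odd' t
  · have := ih u (by omega) (by omega)
    have := hlog u (by omega) (by have := Nat.pow_log_le_self 2 (show u ≠ 0 by omega); omega)
    rw [nafWeight_two_mul] at *
    omega
  · rw [show 2 * u + 1 + 1 = 2 * (u + 1) by ring, nafWeight_two_mul]
    rcases (Nat.pow_log_le_self 2 (show u + 1 ≠ 0 by omega)).eq_or_lt with hpow | hlt
    · rw [← hpow, nafWeight_two_pow]
      have := Nat.log_pos one_lt_two (show 2 ≤ 2 * (2 * u + 1) + 1 by omega)
      omega
    · have := ih (u + 1) (by omega) (by omega)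
      have := hlog (u + 1) (by omega) (by omega)
      omega

end Nat

namespace Int

def nafWeight (z : ℤ) : ℕ := z.natAbs.nafWeight

@[simp] theorem nafWeight_natCast (n : ℕ) : (n : ℤ).nafWeight = n.nafWeight := rfl

@[simp] theorem nafWeight_zero : (0 : ℤ).nafWeight = 0 := Nat.nafWeight_zero

@[simp] theorem nafWeight_neg (z : ℤ) : (-z).nafWeight = z.nafWeight := by
  simp [nafWeight]

@[simp] theorem nafWeight_two_pow (e : ℕ) : ((2 : ℤ) ^ e).nafWeight = 1 := by
  rw [nafWeight, Int.natAbs_pow]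
  exact Nat.nafWeight_two_pow e

theorem nafWeight_two_mul (z : ℤ) : (2 * z).nafWeight = z.nafWeight := by
  simpa [nafWeight, Int.natAbs_mul] using Nat.nafWeight_two_mul z.natAbs

theorem nafWeight_two_mul_add_one (t : ℤ) :
    (2 * t + 1).nafWeight = 1 + min t.nafWeight (t + 1).nafWeight := by
  unfold nafWeight
  rcases le_or_gt 0 t with h | h
  · rw [show (2 * t + 1).natAbs = 2 * t.natAbs + 1 by omega, Nat.nafWeight_two_mul_add_one,
      show (t + 1).natAbs = t.natAbs + 1 by omega]
  · rw [show (2 * t + 1).natAbs = 2 * (t + 1).natAbs + 1 by omega, Nat.nafWeight_two_mul_add_one,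
      show (t + 1).natAbs + 1 = t.natAbs by omega, min_comm]

theorem nafWeight_add_one_le (z : ℤ) : (z + 1).nafWeight ≤ z.nafWeight + 1 := by
  induction hn : z.natAbs using Nat.strong_induction_on generalizing z with
  | _ n ih =>
  obtain ⟨t, rfl | rfl⟩ := Int.even_or_odd' z
  · rw [nafWeight_two_mul_add_one, nafWeight_two_mul]
    omega
  · rw [show 2 * t + 1 + 1 = 2 * (t + 1) by ring, nafWeight_two_mul, nafWeight_two_mul_add_one]
    rcases eq_or_ne t (-1) with rfl | ht
    · simp
    · have := ih t.natAbs (by omega) t rfl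
      omega

theorem nafWeight_add_two_pow_le (z : ℤ) (e : ℕ) : (z + 2 ^ e).nafWeight ≤ z.nafWeight + 1 := by
  induction e generalizing z with
  | zero => simpa using nafWeight_add_one_le z
  | succ e ih =>
    obtain ⟨t, rfl | rfl⟩ := Int.even_or_odd' z
    · rw [show 2 * t + 2 ^ (e + 1) = 2 * (t + 2 ^ e) by ring, nafWeight_two_mul, nafWeight_two_mul]
      exact ih t
    · rw [show 2 * t + 1 + 2 ^ (e + 1) = 2 * (t + 2 ^ e) + 1 by ring, nafWeight_two_mul_add_one,
        nafWeight_two_mul_add_one, show t + 2 ^ e + 1 = t + 1 + 2 ^ e by ring]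
      have := ih t
      have := ih (t + 1)
      omega

theorem nafWeight_sub_two_pow_le (z : ℤ) (e : ℕ) : (z - 2 ^ e).nafWeight ≤ z.nafWeight + 1 := by
  have := nafWeight_add_two_pow_le (-z) e
  rwa [show -z + 2 ^ e = -(z - 2 ^ e) by ring, nafWeight_neg, nafWeight_neg] at this

theorem exists_nafWeight_add_one_eq (z : ℤ) (hz : z ≠ 0) :
    ∃ (y : ℤ) (e : ℕ), (z = y + 2 ^ e ∨ z = y - 2 ^ e) ∧ y.nafWeight + 1 = z.nafWeight := by
  induction hn : z.natAbs using Nat.strong_induction_on generalizing z with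
  | _ n ih =>
  obtain ⟨t, rfl | rfl⟩ := Int.even_or_odd' z
  · obtain ⟨y, e, hy, hw⟩ := ih t.natAbs (by omega) t (by omega) rfl
    refine ⟨2 * y, e + 1, ?_, by rw [nafWeight_two_mul, nafWeight_two_mul, hw]⟩
    rcases hy with rfl | rfl
    exacts [Or.inl (by ring), Or.inr (by ring)]
  · rw [nafWeight_two_mul_add_one]
    rcases le_total t.nafWeight (t + 1).nafWeight with h | h
    · exact ⟨2 * t, 0, Or.inl (by ring), by rw [nafWeight_two_mul]; omega⟩
    · exact ⟨2 * (t + 1), 0, Or.inr (by ring), by rw [nafWeight_two_mul]; omega⟩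

theorem nafWeight_add_le (x y : ℤ) : (x + y).nafWeight ≤ x.nafWeight + y.nafWeight := by
  induction hn : y.nafWeight generalizing y with
  | zero =>
    obtain rfl : y = 0 := by
      by_contra hy
      obtain ⟨_, _, _, hw⟩ := exists_nafWeight_add_one_eq y hy
      omega
    simp
  | succ n ih =>
    obtain ⟨y', e, rfl | rfl, hw⟩ := exists_nafWeight_add_one_eq y (by rintro rfl; simp at hn)
    · have := nafWeight_add_two_pow_le (x + y') e
      have := ih y' (by omega)
      rw [← add_assoc]
      omega
    · have := nafWeight_sub_two_pow_le (x + y') e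
      have := ih y' (by omega)
      rw [← add_sub_assoc]
      omega

theorem nafWeight_mul_two_pow_le_one {k : ℤ} (hk : k.natAbs ≤ 2) (e : ℕ) :
    (k * 2 ^ e).nafWeight ≤ 1 := by
  obtain rfl | rfl | rfl | rfl | rfl : k = -2 ∨ k = -1 ∨ k = 0 ∨ k = 1 ∨ k = 2 := by omega
  all_goals simp [neg_mul, ← pow_succ']

end Int

theorem half_sub_logb_le_of_le_add_nafWeight {d b m : ℕ} (hm : m ≤ 3 * b + 1)
    (h : d / 2 ≤ b + m.nafWeight) :
    ((d : ℝ) - Real.logb 2 d - 3 - Real.logb 2 3) / 2 ≤ b := by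
  have hlogd : 0 ≤ Real.logb 2 d := by
    simpa using (Nat.cast_nonneg (Nat.log 2 d)).trans (Real.natLog_le_logb d 2)
  have hlog3 : 0 ≤ Real.logb 2 3 := Real.logb_nonneg one_lt_two (by norm_num)
  have hd : (d : ℝ) ≤ 2 * (d / 2 : ℕ) + 1 := by exact_mod_cast (by omega : d ≤ 2 * (d / 2) + 1)
  rcases Nat.eq_zero_or_pos m with rfl | hm0
  · have : ((d / 2 : ℕ) : ℝ) ≤ b := by exact_mod_cast (by simpa using h)
    linarith
  by_cases hbd : d ≤ 2 * b
  · have : (d : ℝ) ≤ 2 * b := by exact_mod_cast hbd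
    linarith
  have hmd : (m : ℝ) ≤ 3 * d / 2 := by
    have : 2 * m ≤ 3 * d := by omega
    have : (2 * m : ℝ) ≤ 3 * d := by exact_mod_cast this
    linarith
  have hlogm : Real.logb 2 m ≤ Real.logb 2 3 + Real.logb 2 d - 1 := by
    have hd0 : (0 : ℝ) < d := by exact_mod_cast (show 0 < d by omega)
    calc Real.logb 2 m ≤ Real.logb 2 (3 * d / 2) :=
          Real.logb_le_logb_of_le one_lt_two (by exact_mod_cast hm0) hmd
      _ = Real.logb 2 3 + Real.logb 2 d - 1 := by
          rw [Real.logb_div (by positivity) two_ne_zero, Real.logb_mul three_ne_zero hd0.ne',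
            Real.logb_self_eq_one one_lt_two]
  have hw : (2 * m.nafWeight : ℝ) ≤ Real.logb 2 m + 3 := by
    have h1 : (2 * m.nafWeight : ℝ) ≤ Nat.log 2 m + 3 := by
      exact_mod_cast Nat.two_mul_nafWeight_le_log m hm0.ne'
    have h2 := Real.natLog_le_logb m 2
    push_cast at h2
    linarith
  have : ((d / 2 : ℕ) : ℝ) ≤ b + m.nafWeight := by exact_mod_cast h
  linarith

section VertexBorder

variable {V : Type*} (G : SimpleGraph V)

theorem vertexBorder_empty : vertexBorder G ∅ = ∅ := by
  simp [vertexBorder]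

theorem vertexBorder_inter_self (S : Set V) : vertexBorder G S ∩ S = ∅ :=
  Set.disjoint_iff_inter_eq_empty.1 (Set.disjoint_left.2 fun _ hv => hv.1)

theorem vertexBorder_union_subset (A B : Set V) :
    vertexBorder G (A ∪ B) ⊆ vertexBorder G A ∪ vertexBorder G B := by
  rintro v ⟨hv, u, hu | hu, huv⟩
  · exact Or.inl ⟨fun h => hv (Or.inl h), u, hu, huv⟩
  · exact Or.inr ⟨fun h => hv (Or.inr h), u, hu, huv⟩

variable {G}

theorem isoProfile_ncard_le (S : Set V) : isoProfile G S.ncard ≤ (vertexBorder G S).ncard :=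
  Nat.sInf_le ⟨S, rfl, rfl⟩

theorem exists_ncard_eq_isoProfile [Finite V] {s : ℕ} (hs : s ≤ Nat.card V) :
    ∃ S : Set V, S.ncard = s ∧ (vertexBorder G S).ncard = isoProfile G s := by
  obtain ⟨S, -, hS⟩ := Set.exists_subset_card_eq (s := (Set.univ : Set V)) (by simpa using hs)
  obtain ⟨T, hT, hTs⟩ := Nat.sInf_mem (⟨_, S, hS, rfl⟩ :
    ((fun S => (vertexBorder G S).ncard) '' {S : Set V | S.ncard = s}).Nonempty)
  exact ⟨T, hT, hTs⟩

theorem isoProfile_le_isoPeak {s : ℕ} (hs : s ≤ Nat.card V) : isoProfile G s ≤ isoPeak G :=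
  le_csSup ((Set.finite_Icc 0 (Nat.card V)).image _).bddAbove ⟨s, ⟨Nat.zero_le s, hs⟩, rfl⟩

theorem isoPeak_le {r : ℕ}
    (h : ∀ s ≤ Nat.card V, ∃ S : Set V, S.ncard = s ∧ (vertexBorder G S).ncard ≤ r) :
    isoPeak G ≤ r := by
  refine csSup_le' ?_
  rintro _ ⟨s, hs, rfl⟩
  obtain ⟨S, rfl, hS⟩ := h s hs.2
  exact (isoProfile_ncard_le S).trans hS

end VertexBorder

namespace QV

variable {q d : ℕ}

def height (u : QV q d) : ℕ := d - u.val.length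

def root : QV q d := ⟨[], Nat.zero_le d⟩

def child (u : QV q d) (i : Fin q) (h : u.val.length < d) : QV q d :=
  ⟨u.val ++ [i], by simpa using h⟩

theorem height_root : height (root : QV q d) = d := by simp [height, root]

theorem height_child (u : QV q d) (i : Fin q) (h : u.val.length < d) :
    height (child u i h) + 1 = height u := by
  simp only [height, child, List.length_append, List.length_singleton]
  omega

theorem length_lt_of_height_eq_succ {u : QV q d} {n : ℕ} (hu : height u = n + 1) :
    u.val.length < d := by
  unfold height at hu
  omega

theorem height_child_of_height_eq_succ {u : QV q d} {n : ℕ} (hu : height u = n + 1) (i : Fin q)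
    (h : u.val.length < d) : height (child u i h) = n := by
  have := height_child u i h
  omega

theorem desc_root : desc (root : QV q d) = Set.univ :=
  Set.eq_univ_of_forall fun _ => List.nil_prefix

theorem mem_desc_self (u : QV q d) : u ∈ desc u := List.prefix_rfl

theorem desc_subset_desc {u v : QV q d} (h : v ∈ desc u) : desc v ⊆ desc u :=
  fun _ hw => List.IsPrefix.trans h hw

theorem child_mem_desc (u : QV q d) (i : Fin q) (h : u.val.length < d) : child u i h ∈ desc u :=
  List.prefix_append _ _

theorem desc_child_subset (u : QV q d) (i : Fin q) (h : u.val.length < d) :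
    desc (child u i h) ⊆ desc u :=
  desc_subset_desc (child_mem_desc u i h)

theorem not_mem_desc_child (u : QV q d) (i : Fin q) (h : u.val.length < d) :
    u ∉ desc (child u i h) := by
  intro hu
  simpa [child] using hu.length_le

theorem disjoint_desc_child (u : QV q d) {i j : Fin q} (hij : i ≠ j) (h : u.val.length < d) :
    Disjoint (desc (child u i h)) (desc (child u j h)) := by
  refine Set.disjoint_left.2 fun w ⟨s, hs⟩ ⟨t, ht⟩ => hij ?_
  rw [← ht, child, child] at hs
  simp only [List.append_assoc, List.singleton_append, List.append_cancel_left_eq,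
    List.cons.injEq] at hs
  exact hs.1

theorem desc_eq_singleton {u : QV q d} (h : height u = 0) : desc u = {u} := by
  refine Set.eq_singleton_iff_unique_mem.2 ⟨mem_desc_self u, fun w hw => Subtype.ext ?_⟩
  have := w.property
  unfold height at h
  exact (hw.eq_of_length (by have := hw.length_le; omega)).symm

theorem adj_child (u : QV q d) (i : Fin q) (h : u.val.length < d) :
    (qTree q d).Adj u (child u i h) :=
  Or.inl ⟨i, rfl⟩

theorem eq_of_adj_of_mem_desc_child {v x y : QV q d} {j : Fin q} {h : v.val.length < d}
    (hx : x ∈ desc (child v j h)) (hy : y ∉ desc (child v j h)) (hxy : (qTree q d).Adj x y) :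
    x = child v j h ∧ y = v := by
  rcases hxy with ⟨a, hyx⟩ | ⟨a, hxy⟩
  · exact absurd (hx.trans ⟨[a], hyx.symm⟩) hy
  · have hx' : v.val ++ [j] <+: y.val ++ [a] := hxy ▸ hx
    rcases List.prefix_concat_iff.1 hx' with he | hp
    · obtain ⟨hvy, -⟩ := List.append_inj he (by simpa using congrArg List.length he)
      exact ⟨Subtype.ext (hxy.trans he.symm), Subtype.ext hvy.symm⟩
    · exact absurd hp hy

theorem vertexBorder_subset_insert_desc_child {v : QV q d} {j : Fin q} {h : v.val.length < d}
    {P : Set (QV q d)} (hP : P ⊆ desc (child v j h)) :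
    vertexBorder (qTree q d) P ⊆ insert v (desc (child v j h)) := by
  rintro y ⟨-, x, hx, hxy⟩
  by_cases hy : y ∈ desc (child v j h)
  · exact Or.inr hy
  · exact Or.inl (eq_of_adj_of_mem_desc_child (hP hx) hy hxy).2

theorem vertexBorder_desc_child_subset (v : QV q d) (j : Fin q) (h : v.val.length < d) :
    vertexBorder (qTree q d) (desc (child v j h)) ⊆ {v} := fun _ hy =>
  (vertexBorder_subset_insert_desc_child subset_rfl hy).resolve_right hy.1

theorem vertexBorder_diff_desc_child_inter_subset (X : Set (QV q d)) (v : QV q d) (j : Fin q)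
    (h : v.val.length < d) :
    vertexBorder (qTree q d) (X \ desc (child v j h)) ∩ X ⊆ {child v j h} := by
  rintro y ⟨⟨hy, x, ⟨-, hx⟩, hxy⟩, hyX⟩
  have hy' : y ∈ desc (child v j h) := by simpa [hyX] using hy
  exact (eq_of_adj_of_mem_desc_child hy' hx ((qTree q d).adj_symm hxy)).1

theorem child_mem_vertexBorder {S : Set (QV q d)} {u : QV q d} {i : Fin q} {h : u.val.length < d}
    (hu : u ∈ S) (hc : child u i h ∉ S) : child u i h ∈ vertexBorder (qTree q d) S :=
  ⟨hc, u, hu, adj_child u i h⟩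

theorem mem_vertexBorder_of_child_mem {S : Set (QV q d)} {u : QV q d} {i : Fin q}
    {h : u.val.length < d} (hu : u ∉ S) (hc : child u i h ∈ S) : u ∈ vertexBorder (qTree q d) S :=
  ⟨hu, child u i h, hc, (qTree q d).adj_symm (adj_child u i h)⟩

theorem desc_eq_insert (u : QV 2 d) (h : u.val.length < d) :
    desc u = insert u (desc (child u 0 h) ∪ desc (child u 1 h)) := by
  refine Set.Subset.antisymm (fun w ⟨t, ht⟩ => ?_) ?_
  · rcases t with _ | ⟨i, t⟩
    · exact Or.inl (Subtype.ext (by simpa using ht.symm))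
    · have hw : w ∈ desc (child u i h) := ⟨t, by simpa [child] using ht⟩
      fin_cases i
      exacts [Or.inr (Or.inl hw), Or.inr (Or.inr hw)]
  · exact Set.insert_subset (mem_desc_self u)
      (Set.union_subset (desc_child_subset u 0 h) (desc_child_subset u 1 h))

theorem ncard_inter_desc (X : Set (QV 2 d)) (u : QV 2 d) (h : u.val.length < d) :
    (X ∩ desc u).ncard = (if u ∈ X then 1 else 0) +
      (X ∩ desc (child u 0 h)).ncard + (X ∩ desc (child u 1 h)).ncard := by
  have hdisj : Disjoint (X ∩ desc (child u 0 h)) (X ∩ desc (child u 1 h)) :=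
    (disjoint_desc_child u (by decide) h).mono Set.inter_subset_right Set.inter_subset_right
  have hu : u ∉ X ∩ (desc (child u 0 h) ∪ desc (child u 1 h)) := fun hu =>
    hu.2.elim (not_mem_desc_child u 0 h) (not_mem_desc_child u 1 h)
  rw [desc_eq_insert u h]
  split_ifs with huX
  · rw [Set.inter_insert_of_mem huX, Set.ncard_insert_of_notMem hu, Set.inter_union_distrib_left,
      Set.ncard_union_eq hdisj]
    ring
  · rw [Set.inter_insert_of_notMem huX, Set.inter_union_distrib_left, Set.ncard_union_eq hdisj]
    ring

theorem ncard_desc (u : QV 2 d) : (desc u).ncard = 2 ^ (height u + 1) - 1 := by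
  induction hn : height u generalizing u with
  | zero => simp [desc_eq_singleton hn]
  | succ n ih =>
    have h := length_lt_of_height_eq_succ hn
    have h0 := ih (child u 0 h) (height_child_of_height_eq_succ hn 0 h)
    have h1 := ih (child u 1 h) (height_child_of_height_eq_succ hn 1 h)
    have := ncard_inter_desc Set.univ u h
    simp only [Set.univ_inter, Set.mem_univ, if_true] at this
    rw [this, h0, h1, pow_succ 2 (n + 1)]
    have := Nat.one_le_two_pow (n := n + 1)
    omega

theorem natCard_two (d : ℕ) : Nat.card (QV 2 d) = 2 ^ (d + 1) - 1 := by
  rw [← Set.ncard_univ, ← desc_root, ncard_desc, height_root]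

/-- With `N = |S ∩ desc u|` and `h = height u`, the deviation of `N` from `0` or from the full
subtree size `2^(h+1) - 1` splits as `W + U`: `W` is a sum of at most one `±2ᵉ` per border
vertex below `u`, `U` is small. A border vertex `u` keeps room in `W` for the term `-2^(h+1)`
its parent adds when the parent lies in `S`. -/
def BorderDecomposition (S : Set (QV 2 d)) (u : QV 2 d) : Prop :=
  ∃ W U : ℤ,
    ((S ∩ desc u).ncard : ℤ) = (if u ∈ S then 2 ^ (height u + 1) - 1 else 0) + W + U ∧
    W.nafWeight ≤ (vertexBorder (qTree 2 d) S ∩ desc u).ncard ∧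
    (u ∈ vertexBorder (qTree 2 d) S →
      (W - 2 ^ (height u + 1)).nafWeight ≤ (vertexBorder (qTree 2 d) S ∩ desc u).ncard) ∧
    U.natAbs + (if u ∈ vertexBorder (qTree 2 d) S then 1 else 0) ≤
      3 * (vertexBorder (qTree 2 d) S ∩ desc u).ncard

namespace BorderDecomposition

variable {S : Set (QV 2 d)}

theorem of_height_eq_zero {u : QV 2 d} (hu : height u = 0) : BorderDecomposition S u := by
  refine ⟨0, 0, ?_, by simp, fun hB => ?_, ?_⟩
  · by_cases huS : u ∈ S <;> simp [desc_eq_singleton hu, hu, huS]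
  · simpa [desc_eq_singleton hu, hu, hB] using (Int.nafWeight_two_pow 1).le
  · by_cases huB : u ∈ vertexBorder (qTree 2 d) S <;> simp [desc_eq_singleton hu, huB]

theorem exists_of_mem_or_mem_vertexBorder {c : QV 2 d} (hc : BorderDecomposition S c)
    (hcS : c ∈ S ∨ c ∈ vertexBorder (qTree 2 d) S) :
    ∃ W U : ℤ, ((S ∩ desc c).ncard : ℤ) = (2 ^ (height c + 1) - 1) + W + U ∧
      W.nafWeight ≤ (vertexBorder (qTree 2 d) S ∩ desc c).ncard ∧
      U.natAbs ≤ 3 * (vertexBorder (qTree 2 d) S ∩ desc c).ncard := by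
  obtain ⟨W, U, hN, hW, hWB, hU⟩ := hc
  by_cases hc : c ∈ S
  · have hcB : c ∉ vertexBorder (qTree 2 d) S := fun hB => hB.1 hc
    exact ⟨W, U, by simpa [hc] using hN, hW, by simpa [hcB] using hU⟩
  · have hcB := hcS.resolve_left hc
    refine ⟨W - 2 ^ (height c + 1), U + 1, by rw [hN, if_neg hc]; ring, hWB hcB, ?_⟩
    simp only [hcB, if_true] at hU
    omega

theorem of_mem {u : QV 2 d} (h : u.val.length < d) (hu : u ∈ S)
    (h0 : BorderDecomposition S (child u 0 h)) (h1 : BorderDecomposition S (child u 1 h)) :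
    BorderDecomposition S u := by
  have hcS : ∀ i, child u i h ∈ S ∨ child u i h ∈ vertexBorder (qTree 2 d) S := fun i =>
    (em _).imp_right (child_mem_vertexBorder hu)
  obtain ⟨W0, U0, hN0, hW0, hU0⟩ := h0.exists_of_mem_or_mem_vertexBorder (hcS 0)
  obtain ⟨W1, U1, hN1, hW1, hU1⟩ := h1.exists_of_mem_or_mem_vertexBorder (hcS 1)
  have huB : u ∉ vertexBorder (qTree 2 d) S := fun hB => hB.1 hu
  have hN := ncard_inter_desc S u h
  have hB := ncard_inter_desc (vertexBorder (qTree 2 d) S) u h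
  rw [if_pos hu] at hN
  rw [if_neg huB] at hB
  have hh : height u = height (child u 0 h) + 1 := (height_child u 0 h).symm
  have hh1 : height (child u 1 h) = height (child u 0 h) := by
    have := height_child u 1 h; omega
  refine ⟨W0 + W1, U0 + U1, ?_, ?_, fun hB => absurd hB huB, ?_⟩
  · rw [if_pos hu, hN, hh]
    push_cast
    rw [hN0, hN1, hh1]
    ring
  · have := Int.nafWeight_add_le W0 W1
    omega
  · rw [if_neg huB]
    omega

theorem exists_of_parent_not_mem {u : QV 2 d} {i : Fin 2} {h : u.val.length < d} (hu : u ∉ S)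
    (hc : BorderDecomposition S (child u i h)) :
    ∃ k W U : ℤ, (k = 0 ∨ k = 1 ∧ u ∈ vertexBorder (qTree 2 d) S) ∧
      ((S ∩ desc (child u i h)).ncard : ℤ) = k * (2 ^ (height (child u i h) + 1) - 1) + W + U ∧
      W.nafWeight ≤ (vertexBorder (qTree 2 d) S ∩ desc (child u i h)).ncard ∧
      U.natAbs ≤ 3 * (vertexBorder (qTree 2 d) S ∩ desc (child u i h)).ncard := by
  obtain ⟨W, U, hN, hW, -, hU⟩ := hc
  refine ⟨if child u i h ∈ S then 1 else 0, W, U, ?_, by split_ifs at hN ⊢ <;> simp [hN], hW,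
    (Nat.le_add_right _ _).trans hU⟩
  split_ifs with hc
  exacts [Or.inr ⟨rfl, mem_vertexBorder_of_child_mem hu hc⟩, Or.inl rfl]

theorem of_not_mem {u : QV 2 d} (h : u.val.length < d) (hu : u ∉ S)
    (h0 : BorderDecomposition S (child u 0 h)) (h1 : BorderDecomposition S (child u 1 h)) :
    BorderDecomposition S u := by
  obtain ⟨k0, W0, U0, hk0, hN0, hW0, hU0⟩ := h0.exists_of_parent_not_mem hu
  obtain ⟨k1, W1, U1, hk1, hN1, hW1, hU1⟩ := h1.exists_of_parent_not_mem hu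
  obtain ⟨e, he0, he1, heu⟩ : ∃ e, height (child u 0 h) = e ∧ height (child u 1 h) = e ∧
      height u = e + 1 := by
    have := height_child u 0 h
    have := height_child u 1 h
    exact ⟨_, rfl, by omega, by omega⟩
  rw [he0] at hN0
  rw [he1] at hN1
  have hN := ncard_inter_desc S u h
  have hB := ncard_inter_desc (vertexBorder (qTree 2 d) S) u h
  have hW := Int.nafWeight_add_le W0 W1
  unfold BorderDecomposition
  rw [if_neg hu] at hN ⊢
  rw [heu]
  by_cases huB : u ∈ vertexBorder (qTree 2 d) S
  · have : (k0 = 0 ∨ k0 = 1) ∧ (k1 = 0 ∨ k1 = 1) := by tauto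
    rw [if_pos huB] at hB ⊢
    refine ⟨W0 + W1 + (k0 + k1) * 2 ^ (e + 1), U0 + U1 - k0 - k1, ?_, ?_, fun _ => ?_, by omega⟩
    · push_cast [hN, hN0, hN1]
      ring
    · have := Int.nafWeight_mul_two_pow_le_one (k := k0 + k1) (by omega) (e + 1)
      have := Int.nafWeight_add_le (W0 + W1) ((k0 + k1) * 2 ^ (e + 1))
      omega
    · rw [show W0 + W1 + (k0 + k1) * 2 ^ (e + 1) - 2 ^ (e + 1 + 1) =
        W0 + W1 + (k0 + k1 - 2) * 2 ^ (e + 1) by ring]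
      have := Int.nafWeight_mul_two_pow_le_one (k := k0 + k1 - 2) (by omega) (e + 1)
      have := Int.nafWeight_add_le (W0 + W1) ((k0 + k1 - 2) * 2 ^ (e + 1))
      omega
  · obtain ⟨rfl, rfl⟩ : k0 = 0 ∧ k1 = 0 := by tauto
    rw [if_neg huB] at hB ⊢
    refine ⟨W0 + W1, U0 + U1, ?_, by omega, fun h => absurd h huB, by omega⟩
    push_cast [hN, hN0, hN1]
    ring

end BorderDecomposition

theorem borderDecomposition (S : Set (QV 2 d)) (u : QV 2 d) : BorderDecomposition S u := by
  induction hn : height u generalizing u with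
  | zero => exact .of_height_eq_zero hn
  | succ n ih =>
    have h := length_lt_of_height_eq_succ hn
    have h0 := ih (child u 0 h) (height_child_of_height_eq_succ hn 0 h)
    have h1 := ih (child u 1 h) (height_child_of_height_eq_succ hn 1 h)
    by_cases hu : u ∈ S
    exacts [.of_mem h hu h0 h1, .of_not_mem h hu h0 h1]

theorem exists_nafWeight_ncard_le (S : Set (QV 2 d)) :
    ∃ m ≤ 3 * (vertexBorder (qTree 2 d) S).ncard + 1,
      S.ncard.nafWeight ≤ (vertexBorder (qTree 2 d) S).ncard + 1 + m.nafWeight := by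
  obtain ⟨W, U, hN, hW, -, hU⟩ := borderDecomposition S root
  simp only [desc_root, Set.inter_univ, height_root] at hN hW hU
  obtain ⟨r, hr, hNr⟩ : ∃ r : ℤ, r.natAbs ≤ 1 ∧ (S.ncard : ℤ) = r * 2 ^ (d + 1) + W + (U - r) := by
    by_cases hS : root ∈ S
    · exact ⟨1, le_rfl, by rw [hN, if_pos hS]; ring⟩
    · exact ⟨0, zero_le_one, by rw [hN, if_neg hS]; ring⟩
  refine ⟨(U - r).natAbs, by split_ifs at hU <;> omega, ?_⟩
  have := Int.nafWeight_mul_two_pow_le_one (k := r) (by omega) (d + 1)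
  have := Int.nafWeight_add_le (r * 2 ^ (d + 1)) W
  have := Int.nafWeight_add_le (r * 2 ^ (d + 1) + W) (U - r)
  rw [← Int.nafWeight_natCast, hNr]
  change _ ≤ _ + (U - r).nafWeight
  omega

theorem le_ncard_vertexBorder {S : Set (QV 2 d)} (hS : S.ncard = (2 ^ (d + 1) + 1) / 3) :
    ((d : ℝ) - Real.logb 2 d - 3 - Real.logb 2 3) / 2 ≤ (vertexBorder (qTree 2 d) S).ncard := by
  obtain ⟨m, hm, hw⟩ := exists_nafWeight_ncard_le S
  have := Nat.div_two_add_one_le_nafWeight d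
  rw [hS] at hw
  exact half_sub_logb_le_of_le_add_nafWeight hm (by omega)

/-- Only border vertices inside `desc u` are counted: the one other possible border vertex, the
parent of `u`, is accounted for one level up. -/
def HasBorderBoundedSubsets (d h f : ℕ) : Prop :=
  ∀ u : QV 2 d, height u = h → ∀ s ≤ 2 ^ (h + 1) - 1,
    ∃ S ⊆ desc u, S.ncard = s ∧ (vertexBorder (qTree 2 d) S ∩ desc u).ncard ≤ f

theorem hasBorderBoundedSubsets_zero : HasBorderBoundedSubsets d 0 0 := by
  intro u hu s hs
  obtain rfl | rfl : s = 0 ∨ s = 1 := by omega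
  · exact ⟨∅, Set.empty_subset _, Set.ncard_empty _, by simp [vertexBorder_empty]⟩
  · exact ⟨desc u, subset_rfl, by simp [ncard_desc, hu], by simp [vertexBorder_inter_self]⟩

namespace HasBorderBoundedSubsets

variable {h f : ℕ}

theorem exists_union (H : HasBorderBoundedSubsets d h f) {u v : QV 2 d} (hv : v ∈ desc u)
    {j : Fin 2} {hvd : v.val.length < d} (hw : height (child v j hvd) = h) {A : Set (QV 2 d)}
    (hAu : A ⊆ desc u) (hAw : Disjoint A (desc (child v j hvd)))
    (hAB : vertexBorder (qTree 2 d) A ∩ desc u ⊆ {v}) {s : ℕ} (hs₁ : A.ncard ≤ s)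
    (hs₂ : s ≤ A.ncard + (2 ^ (h + 1) - 1)) :
    ∃ S ⊆ desc u, S.ncard = s ∧ (vertexBorder (qTree 2 d) S ∩ desc u).ncard ≤ f + 1 := by
  obtain ⟨P, hPw, hPs, hPB⟩ := H (child v j hvd) hw (s - A.ncard) (by omega)
  have hsub : vertexBorder (qTree 2 d) (A ∪ P) ∩ desc u ⊆
      insert v (vertexBorder (qTree 2 d) P ∩ desc (child v j hvd)) := by
    rintro x ⟨hx, hxu⟩
    rcases vertexBorder_union_subset _ A P hx with hxA | hxP
    · exact Or.inl (hAB ⟨hxA, hxu⟩)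
    · exact (vertexBorder_subset_insert_desc_child hPw hxP).imp_right fun hxw => ⟨hxP, hxw⟩
  refine ⟨A ∪ P, Set.union_subset hAu ?_, ?_, ?_⟩
  · exact hPw.trans ((desc_child_subset v j hvd).trans (desc_subset_desc hv))
  · rw [Set.ncard_union_eq (hAw.mono_right hPw)]
    omega
  · exact (Set.ncard_le_ncard hsub).trans ((Set.ncard_insert_le _ _).trans (by omega))

theorem succ (H : HasBorderBoundedSubsets d h f) :
    HasBorderBoundedSubsets d (h + 1) (f + 1) := by
  intro u hu s hs
  have hud := length_lt_of_height_eq_succ hu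
  have hc := height_child_of_height_eq_succ hu
  have hM := ncard_desc (child u 0 hud)
  rw [hc] at hM
  rw [pow_succ] at hs
  rcases le_or_gt s (2 ^ (h + 1) - 1) with hs₁ | hs₁
  · exact H.exists_union (mem_desc_self u) (hc 0 hud) (Set.empty_subset _)
      (Set.empty_disjoint _) (by simp [vertexBorder_empty]) (by simp) (by simpa using hs₁)
  rcases le_or_gt s (2 * (2 ^ (h + 1) - 1)) with hs₂ | hs₂
  · exact H.exists_union (mem_desc_self u) (hc 1 hud) (desc_child_subset u 0 hud)
      (disjoint_desc_child u (by decide) hud)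
      (Set.inter_subset_left.trans (vertexBorder_desc_child_subset u 0 hud)) (by omega)
      (by omega)
  · exact ⟨desc u, subset_rfl, by rw [ncard_desc, hu, pow_succ]; omega,
      by simp [vertexBorder_inter_self]⟩

theorem exists_of_le_half (H : HasBorderBoundedSubsets d h f) {u : QV 2 d}
    (hu : height u = h + 2) {s : ℕ} (hs : s ≤ 2 ^ (h + 2) - 1) :
    ∃ S ⊆ desc u, S.ncard = s ∧ (vertexBorder (qTree 2 d) S ∩ desc u).ncard ≤ f + 1 := by
  have hud := length_lt_of_height_eq_succ hu
  have hc := height_child_of_height_eq_succ hu 0 hud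
  have hu₀d := length_lt_of_height_eq_succ hc
  have hgc := height_child_of_height_eq_succ hc
  have hM := ncard_desc (child (child u 0 hud) 0 hu₀d)
  rw [hgc] at hM
  have hpow : 2 ^ (h + 2) = 2 * 2 ^ (h + 1) := pow_succ' _ _
  rcases le_or_gt s (2 ^ (h + 1) - 1) with hs₁ | hs₁
  · exact H.exists_union (child_mem_desc u 0 hud) (hgc 0 hu₀d) (Set.empty_subset _)
      (Set.empty_disjoint _) (by simp [vertexBorder_empty]) (by simp) (by simpa using hs₁)
  rcases le_or_gt s (2 * (2 ^ (h + 1) - 1)) with hs₂ | hs₂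
  · exact H.exists_union (child_mem_desc u 0 hud) (hgc 1 hu₀d)
      ((desc_child_subset _ 0 hu₀d).trans (desc_child_subset u 0 hud))
      (disjoint_desc_child _ (by decide) hu₀d)
      (Set.inter_subset_left.trans (vertexBorder_desc_child_subset _ 0 hu₀d)) (by omega)
      (by omega)
  · have hM₀ := ncard_desc (child u 0 hud)
    rw [hc] at hM₀
    refine ⟨desc (child u 0 hud), desc_child_subset u 0 hud, by omega, ?_⟩
    exact (Set.ncard_le_ncard (Set.inter_subset_left.trans
      (vertexBorder_desc_child_subset u 0 hud))).trans (by simp)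

theorem exists_of_half_lt (H : HasBorderBoundedSubsets d h f) {u : QV 2 d}
    (hu : height u = h + 2) {s : ℕ} (hs₀ : 2 ^ (h + 2) - 1 < s) (hs : s ≤ 2 ^ (h + 3) - 1) :
    ∃ S ⊆ desc u, S.ncard = s ∧ (vertexBorder (qTree 2 d) S ∩ desc u).ncard ≤ f + 1 := by
  have hud := length_lt_of_height_eq_succ hu
  have hc := height_child_of_height_eq_succ hu 1 hud
  have hu₁d := length_lt_of_height_eq_succ hc
  have hgc := height_child_of_height_eq_succ hc
  have hM := ncard_desc (child (child u 1 hud) 0 hu₁d)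
  have hM₁ := ncard_desc (child u 1 hud)
  have hM₂ := ncard_desc u
  rw [hgc] at hM
  rw [hc] at hM₁
  rw [hu] at hM₂
  have hpow : 2 ^ (h + 3) = 2 * 2 ^ (h + 2) ∧ 2 ^ (h + 2) = 2 * 2 ^ (h + 1) :=
    ⟨pow_succ' _ _, pow_succ' _ _⟩
  have hsub₁ : desc (child u 1 hud) ⊆ desc u := desc_child_subset u 1 hud
  have hL := Set.ncard_sdiff hsub₁
  have hLB := vertexBorder_diff_desc_child_inter_subset (desc u) u 1 hud
  have hL₀ : Disjoint (desc u \ desc (child u 1 hud)) (desc (child (child u 1 hud) 0 hu₁d)) :=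
    Set.disjoint_sdiff_left.mono_right (desc_child_subset _ 0 hu₁d)
  rcases le_or_gt s (3 * (2 ^ (h + 1) - 1) + 2) with hs₁ | hs₁
  · exact H.exists_union (child_mem_desc u 1 hud) (hgc 0 hu₁d) Set.sdiff_subset hL₀ hLB
      (by omega) (by omega)
  rcases le_or_gt s (4 * (2 ^ (h + 1) - 1) + 2) with hs₂ | hs₂
  · refine H.exists_union (child_mem_desc u 1 hud) (hgc 1 hu₁d)
      (Set.union_subset Set.sdiff_subset ((desc_child_subset _ 0 hu₁d).trans hsub₁))
      (Disjoint.union_left (Set.disjoint_sdiff_left.mono_right (desc_child_subset _ 1 hu₁d))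
        (disjoint_desc_child _ (by decide) hu₁d)) (fun x ⟨hx, hxu⟩ => ?_) ?_ ?_
    · rcases vertexBorder_union_subset _ _ _ hx with hx | hx
      exacts [hLB ⟨hx, hxu⟩, vertexBorder_desc_child_subset _ 0 hu₁d hx]
    all_goals rw [Set.ncard_union_eq hL₀]; omega
  · exact ⟨desc u, subset_rfl, by omega, by simp [vertexBorder_inter_self]⟩

theorem add_two (H : HasBorderBoundedSubsets d h f) :
    HasBorderBoundedSubsets d (h + 2) (f + 1) := by
  intro u hu s hs
  rcases le_or_gt s (2 ^ (h + 2) - 1) with hs₀ | hs₀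
  exacts [H.exists_of_le_half hu hs₀, H.exists_of_half_lt hu hs₀ hs]

end HasBorderBoundedSubsets

theorem hasBorderBoundedSubsets_half (d h : ℕ) : HasBorderBoundedSubsets d h ((h + 1) / 2) := by
  induction h using Nat.twoStepInduction with
  | zero => exact hasBorderBoundedSubsets_zero
  | one => exact hasBorderBoundedSubsets_zero.succ
  | more n ih _ => simpa [show (n + 2 + 1) / 2 = (n + 1) / 2 + 1 by omega] using ih.add_two

theorem isoPeak_qTree_two_le (d : ℕ) : isoPeak (qTree 2 d) ≤ (d + 1) / 2 := by
  refine isoPeak_le fun s hs => ?_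
  obtain ⟨S, -, hSs, hSB⟩ :=
    hasBorderBoundedSubsets_half d d root height_root s (by rwa [natCard_two] at hs)
  exact ⟨S, hSs, by rwa [desc_root, Set.inter_univ] at hSB⟩

end QV

theorem binary_tree_iso_peak_bounds_general (d : ℕ) :
    ((d : ℝ) - Real.logb 2 d - 3 - Real.logb 2 3) / 2 ≤ (isoPeak (qTree 2 d) : ℝ) ∧
    (isoPeak (qTree 2 d) : ℝ) ≤ (⌈(d : ℝ) / 2⌉ : ℤ) := by
  constructor
  · have hs : (2 ^ (d + 1) + 1) / 3 ≤ Nat.card (QV 2 d) := by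
      have := Nat.one_lt_two_pow (n := d + 1) (by omega)
      rw [QV.natCard_two]
      omega
    obtain ⟨S, hS, hSB⟩ := exists_ncard_eq_isoProfile (G := qTree 2 d) hs
    calc _ ≤ ((vertexBorder (qTree 2 d) S).ncard : ℝ) := QV.le_ncard_vertexBorder hS
      _ ≤ isoPeak (qTree 2 d) := by rw [hSB]; exact_mod_cast isoProfile_le_isoPeak hs
  · have h : (2 * isoPeak (qTree 2 d) : ℝ) ≤ d + 1 := by
      exact_mod_cast (by have := QV.isoPeak_qTree_two_le d; omega)
    have : (isoPeak (qTree 2 d) : ℤ) ≤ ⌈(d : ℝ) / 2⌉ := Int.le_ceil_iff.2 (by push_cast; linarith)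
    exact_mod_cast this

theorem binary_tree_iso_peak_bounds (d : ℕ) (hd : 1 ≤ d) :
    ((d : ℝ) - Real.logb 2 d - 3 - Real.logb 2 3) / 2 ≤ (isoPeak (qTree 2 d) : ℝ) ∧
    (isoPeak (qTree 2 d) : ℝ) ≤ (⌈(d : ℝ) / 2⌉ : ℤ) :=
  binary_tree_iso_peak_bounds_general d
end

section
/- Let q ∈ {3,4}, let d ≥ 1 be an integer, and let T be the complete q-ary tree of depth d. Then Φ_V(T) ≥ d − log_q(d) − (log_q(2) + 1). -/
open scoped Classical

/-!
Let `a j` and `c j` count the vertices of `S` and of `δ(S)` on level `j`. The children and the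
parent of a vertex of `S` lie in `S ∪ δ(S)`, so the jump `a (j + 1) - q * a j` lies between
`-c (j + 1)` and `q * c j`. The walk `w j = (q - 1) * a j - q ^ j` satisfies
`w (j + 1) = q * w j + (q - 1) * (a (j + 1) - q * a j)` and, for `q ≥ 3`, never vanishes
(`q ^ j ≡ 1 mod q - 1`). Each level raises `log_q |w j|` by one, except for a loss paid for by the
border, so `d ≤ log_q |w d| + |δ(S)|`. For `|S| = ∑_{j ≤ d} (1 + q + ⋯ + q ^ (j - 1))` the walk
sums to `-(d + 1)`, which keeps `|w d| ≤ 2 d q` unless the border already has `d` vertices.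
-/

open Finset

section IntLog

variable {q : ℕ}

lemma log_natAbs_add_one_le_of_mul_le (hq : 2 ≤ q) {x y : ℤ} (hx : x ≠ 0)
    (h : q * |x| ≤ |y|) : Nat.log q x.natAbs + 1 ≤ Nat.log q y.natAbs := by
  have h' : x.natAbs * q ≤ y.natAbs := by
    zify; linarith
  rw [← Nat.log_mul_base (by omega) (by simpa using hx)]
  exact Nat.log_mono_right h'

lemma log_natAbs_add_one_le_add (hq : 2 ≤ q) {x y E : ℤ} {K : ℕ} (hx : x ≠ 0)
    (hxy : y = q * x + (q - 1) * E) (hE : |E| ≤ q * K) :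
    Nat.log q x.natAbs + 1 ≤ Nat.log q y.natAbs + K := by
  set L := Nat.log q x.natAbs
  rcases lt_or_ge L K with hLK | hKL
  · omega
  suffices q ^ (L + 1 - K) ≤ y.natAbs by
    have := Nat.le_log_of_pow_le (by omega) this
    omega
  have hq1 : (1 : ℤ) ≤ q - 1 := by omega
  have hxL : (q : ℤ) ^ L ≤ |x| := by
    rw [← Int.natCast_natAbs]; exact_mod_cast Nat.pow_log_le_self q (by simpa using hx)
  have hbern : 1 + K * ((q : ℤ) - 1) ≤ (q : ℤ) ^ K := by
    simpa using one_add_mul_le_pow (a := (q : ℤ) - 1) (by linarith) K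
  have hsplit : (q : ℤ) ^ (L + 1 - K) * q ^ K = q * q ^ L := by
    rw [← pow_add, ← pow_succ']; congr 1; omega
  have hqM : (q : ℤ) ≤ q ^ (L + 1 - K) := le_self_pow₀ (by linarith) (by omega)
  have htri : q * |x| - (q - 1) * |E| ≤ |y| := by
    have h := abs_sub y ((q - 1) * E)
    rw [show y - (q - 1) * E = q * x by rw [hxy]; ring, abs_mul, abs_mul,
      abs_of_pos (by linarith : (0 : ℤ) < q), abs_of_pos (by linarith : (0 : ℤ) < q - 1)] at h
    linarith
  -- Bernoulli's `q ^ K ≥ 1 + K (q - 1)` gives `q ^ (L + 1) - q (q - 1) K ≥ q ^ (L + 1 - K)`.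
  zify
  nlinarith [mul_le_mul_of_nonneg_left hbern (by positivity : (0 : ℤ) ≤ q ^ (L + 1 - K)),
    mul_le_mul_of_nonneg_left hE (by linarith : (0 : ℤ) ≤ q - 1),
    mul_le_mul_of_nonneg_right hqM (by positivity : (0 : ℤ) ≤ K * (q - 1))]

lemma log_natAbs_add_two_le_of_lt_pow (hq : 2 ≤ q) {x y F : ℤ} (hx : 0 < x)
    (hxy : y = q * x - (q - 1) * F) (hy : y < q ^ Nat.log q x.natAbs) :
    (Nat.log q x.natAbs : ℤ) + 2 ≤ F := by
  set L := Nat.log q x.natAbs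
  have hxL : (q : ℤ) ^ L ≤ x := by
    rw [← abs_of_pos hx, ← Int.natCast_natAbs]
    exact_mod_cast Nat.pow_log_le_self q (by simpa using hx.ne')
  have hLq : (L : ℤ) < q ^ L := by exact_mod_cast Nat.lt_pow_self (by omega)
  have hF : (q : ℤ) ^ L < F := by
    refine lt_of_mul_lt_mul_left ?_ (by omega : (0 : ℤ) ≤ q - 1)
    nlinarith
  omega

lemma log_natAbs_add_two_le_add (hq : 2 ≤ q) {x y z F E : ℤ} {K : ℕ}
    (hx : x ≠ 0) (hy : y ≠ 0)
    (hxy : y = q * x - (q - 1) * F) (hyz : z = q * y + (q - 1) * E)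
    (hF : 0 < F) (hFK : F ≤ K) (hE : 0 < E) (hEK : E ≤ q * K) :
    Nat.log q x.natAbs + 2 ≤ Nat.log q z.natAbs + K := by
  have hq1 : (1 : ℤ) ≤ q - 1 := by omega
  rcases hx.lt_or_gt with hneg | hpos
  · have hxy' : q * |x| ≤ |y| := by
      rw [abs_of_neg hneg, abs_of_neg (by nlinarith)]; nlinarith
    have hyz' : |E| ≤ q * K := by rw [abs_of_pos hE]; exact hEK
    have := log_natAbs_add_one_le_of_mul_le hq hx hxy'
    have := log_natAbs_add_one_le_add hq hy hyz hyz'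
    omega
  by_cases hlow : y < q ^ Nat.log q x.natAbs
  · have := log_natAbs_add_two_le_of_lt_pow hq hpos hxy hlow
    omega
  push Not at hlow
  have hypos : 0 < y := lt_of_lt_of_le (by positivity) hlow
  have hxy' : Nat.log q x.natAbs ≤ Nat.log q y.natAbs := by
    refine Nat.le_log_of_pow_le (by omega) ?_
    zify; rw [abs_of_pos hypos]; exact hlow
  have hyz' : q * |y| ≤ |z| := by
    rw [abs_of_pos hypos, abs_of_pos (by nlinarith)]; nlinarith
  have := log_natAbs_add_one_le_of_mul_le hq hy hyz'
  omega

end IntLog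

section Walk

variable {q d : ℕ} {w e : ℕ → ℤ} {c : ℕ → ℕ}

/-- An upward jump `e j` is paid for by `c j`, a downward one by `c (j + 1)`. A downward jump
followed by an upward one would charge `c (j + 1)` twice, so such a pair is taken as one step. -/
lemma le_log_natAbs_add_charges (hq : 2 ≤ q) (hw : ∀ j, w j ≠ 0)
    (hrec : ∀ j, w (j + 1) = q * w j + (q - 1) * e j)
    (hup : ∀ j < d, e j ≤ q * c j) (hdown : ∀ j < d, -(c (j + 1) : ℤ) ≤ e j) (hlast : e d ≤ 0)
    (j : ℕ) (hj : j ≤ d) :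
    d - j + Nat.log q (w j).natAbs ≤
      Nat.log q (w d).natAbs + (if 0 < e j then c j else 0) + ∑ k ∈ Ico j d, c (k + 1) := by
  induction hn : d - j using Nat.strong_induction_on generalizing j with
  | _ n ih =>
  rcases hj.eq_or_lt with rfl | hjd
  · simp [← hn]
  have hcharge : ∀ k, (if 0 < e k then c k else 0) ≤ c k := fun k => by split_ifs <;> omega
  have hsplit : ∑ k ∈ Ico j d, c (k + 1) = c (j + 1) + ∑ k ∈ Ico (j + 1) d, c (k + 1) :=
    sum_eq_sum_Ico_succ_bot hjd _
  have ih1 := ih (d - (j + 1)) (by omega) (j + 1) hjd rfl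
  rcases le_or_gt 0 (e j) with hej | hej
  · have hstep := log_natAbs_add_one_le_add (K := if 0 < e j then c j else 0) hq (hw j) (hrec j)
      (by split_ifs with h
          · rw [abs_of_pos h]; exact hup j hjd
          · simp [le_antisymm (not_lt.1 h) hej])
    have := hcharge (j + 1)
    omega
  have hcharge_j : (if 0 < e j then c j else 0) = 0 := if_neg (by omega)
  rcases le_or_gt (e (j + 1)) 0 with hflat | hpair
  · have hstep := log_natAbs_add_one_le_add (K := c (j + 1)) hq (hw j) (hrec j)
      (by rw [abs_of_neg hej]; nlinarith [hdown j hjd])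
    have : (if 0 < e (j + 1) then c (j + 1) else 0) = 0 := if_neg (by omega)
    omega
  have hjd' : j + 1 < d := by
    by_contra h
    obtain rfl : d = j + 1 := by omega
    omega
  have hstep : Nat.log q (w j).natAbs + 2 ≤ Nat.log q (w (j + 2)).natAbs + c (j + 1) :=
    log_natAbs_add_two_le_add (F := -e j) hq (hw j) (hw (j + 1)) (by rw [hrec]; ring)
      (hrec (j + 1)) (by omega) (by linarith [hdown j hjd]) hpair (hup _ hjd')
  have ih2 := ih (d - (j + 2)) (by omega) (j + 2) hjd' rfl
  have hsplit' : ∑ k ∈ Ico (j + 1) d, c (k + 1) = c (j + 2) + ∑ k ∈ Ico (j + 2) d, c (k + 1) :=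
    sum_eq_sum_Ico_succ_bot hjd' _
  have := hcharge (j + 2)
  omega

theorem le_log_natAbs_add_sum (hq : 2 ≤ q) (hw : ∀ j, w j ≠ 0)
    (hrec : ∀ j, w (j + 1) = q * w j + (q - 1) * e j)
    (hup : ∀ j < d, e j ≤ q * c j) (hdown : ∀ j < d, -(c (j + 1) : ℤ) ≤ e j) (hlast : e d ≤ 0) :
    d ≤ Nat.log q (w d).natAbs + ∑ j ∈ range (d + 1), c j := by
  have h := le_log_natAbs_add_charges hq hw hrec hup hdown hlast 0 (Nat.zero_le d)
  have : (if 0 < e 0 then c 0 else 0) ≤ c 0 := by split_ifs <;> omega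
  rw [sum_range_succ', ← range_eq_Ico] at *
  omega

lemma mul_eq_sum_add_sum_of_rec (hrec : ∀ j, w (j + 1) = q * w j + (q - 1) * e j) (d : ℕ) :
    q * w d = (q - 1) * ∑ j ∈ range (d + 1), w j + w 0 + (q - 1) * ∑ j ∈ range d, e j := by
  induction d with
  | zero => simp; ring
  | succ n ih =>
    rw [sum_range_succ w (n + 1), sum_range_succ e n, hrec n]
    linear_combination ih

lemma natAbs_le_of_sum_lt (hq : 2 ≤ q) (hrec : ∀ j, w (j + 1) = q * w j + (q - 1) * e j)
    (hup : ∀ j < d, e j ≤ q * c j) (hdown : ∀ j < d, -(c (j + 1) : ℤ) ≤ e j)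
    (hsum : ∑ j ∈ range (d + 1), w j = -(d + 1)) (h0 : |w 0| ≤ q - 1)
    (hC : ∑ j ∈ range (d + 1), c j < d) :
    (w d).natAbs ≤ 2 * d * q := by
  set C := ∑ j ∈ range (d + 1), c j
  have hq1 : (1 : ℤ) ≤ q - 1 := by omega
  have he : |∑ j ∈ range d, e j| ≤ (q + 1) * C := by
    have hc : ∑ j ∈ range d, (c j : ℤ) ≤ C ∧ ∑ j ∈ range d, (c (j + 1) : ℤ) ≤ C := by
      have h1 := sum_range_succ (fun j => (c j : ℤ)) d
      have h2 := sum_range_succ' (fun j => (c j : ℤ)) d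
      simp only [C]; push_cast
      constructor <;> linarith [(c 0).cast_nonneg (α := ℤ), (c d).cast_nonneg (α := ℤ)]
    calc |∑ j ∈ range d, e j| ≤ ∑ j ∈ range d, |e j| := abs_sum_le_sum_abs _ _
      _ ≤ ∑ j ∈ range d, (q * c j + c (j + 1) : ℤ) := by
        refine sum_le_sum fun j hj => abs_le.2 ⟨?_, ?_⟩
        · have : (0 : ℤ) ≤ q * c j := by positivity
          linarith [hdown j (mem_range.1 hj)]
        · linarith [hup j (mem_range.1 hj), (c (j + 1)).cast_nonneg (α := ℤ)]
      _ ≤ (q + 1) * C := by rw [sum_add_distrib, ← mul_sum]; nlinarith [hc.1, hc.2]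
  have hqw : q * |w d| ≤ (q - 1) * (d + 1) + (q - 1) + (q - 1) * ((q + 1) * C) := by
    have := mul_eq_sum_add_sum_of_rec hrec d
    rw [hsum] at this
    calc (q : ℤ) * |w d| = |q * w d| := by rw [abs_mul, Nat.abs_cast]
      _ ≤ |(q - 1) * -(d + 1 : ℤ)| + |w 0| + |(q - 1) * ∑ j ∈ range d, e j| := by
        rw [this]; exact abs_add_three _ _ _
      _ ≤ _ := by
        rw [abs_mul, abs_mul, abs_of_pos (by omega : (0 : ℤ) < q - 1), abs_neg,
          abs_of_pos (by positivity : (0 : ℤ) < d + 1)]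
        gcongr
  have hCd : (q - 1) * ((q + 1) * (C : ℤ)) ≤ (q - 1) * ((q + 1) * (d - 1)) := by
    have : (C : ℤ) + 1 ≤ d := by exact_mod_cast hC
    gcongr; linarith
  have hqd : (0 : ℤ) ≤ (q - 1) * (q * d) := by positivity
  zify
  refine le_of_mul_le_mul_left (a := (q : ℤ)) ?_ (by positivity)
  nlinarith

theorem le_sum_add_log (hq : 2 ≤ q) (hw : ∀ j, w j ≠ 0)
    (hrec : ∀ j, w (j + 1) = q * w j + (q - 1) * e j)
    (hup : ∀ j < d, e j ≤ q * c j) (hdown : ∀ j < d, -(c (j + 1) : ℤ) ≤ e j) (hlast : e d ≤ 0)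
    (hsum : ∑ j ∈ range (d + 1), w j = -(d + 1)) (h0 : |w 0| ≤ q - 1) :
    d ≤ ∑ j ∈ range (d + 1), c j + Nat.log q (2 * d * q) := by
  by_cases hC : d ≤ ∑ j ∈ range (d + 1), c j
  · omega
  have hlog := le_log_natAbs_add_sum hq hw hrec hup hdown hlast
  have hwd := Nat.log_mono_right (b := q)
    (natAbs_le_of_sum_lt hq hrec hup hdown hsum h0 (by omega))
  omega

end Walk

namespace QaryLevels

variable {q d : ℕ} {a c : ℕ → ℕ}

def critSize (q d : ℕ) : ℕ := ∑ j ∈ range (d + 1), ∑ i ∈ range j, q ^ i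

def walk (q : ℕ) (a : ℕ → ℕ) (j : ℕ) : ℤ := (q - 1) * a j - q ^ j

def jump (q : ℕ) (a : ℕ → ℕ) (j : ℕ) : ℤ := a (j + 1) - q * a j

lemma walk_succ (j : ℕ) : walk q a (j + 1) = q * walk q a j + (q - 1) * jump q a j := by
  simp only [walk, jump]; ring

lemma walk_ne_zero (hq : 3 ≤ q) (j : ℕ) : walk q a j ≠ 0 := by
  intro h
  have hdvd : (q - 1 : ℤ) ∣ 1 := by
    have h' : (1 : ℤ) = (q - 1) * a j - ((q : ℤ) ^ j - 1 ^ j) := by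
      rw [one_pow]; unfold walk at h; linarith
    have := dvd_sub (dvd_mul_right ((q : ℤ) - 1) (a j)) (sub_dvd_pow_sub_pow (q : ℤ) 1 j)
    rwa [← h'] at this
  have := Int.eq_one_of_dvd_one (by omega) hdvd
  omega

lemma sum_walk (hsum : ∑ j ∈ range (d + 1), a j = critSize q d) :
    ∑ j ∈ range (d + 1), walk q a j = -(d + 1) := by
  have hgeom : ∀ j, walk q a j = (q - 1) * (a j - ∑ i ∈ range j, (q : ℤ) ^ i) - 1 := fun j => by
    rw [walk, mul_sub, mul_comm _ (∑ i ∈ range j, (q : ℤ) ^ i), geom_sum_mul]; ring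
  have hsumZ : ∑ j ∈ range (d + 1), (a j : ℤ) =
      ∑ j ∈ range (d + 1), ∑ i ∈ range j, (q : ℤ) ^ i := by
    exact_mod_cast hsum
  simp only [hgeom, sum_sub_distrib, ← mul_sum, hsumZ, sub_self, mul_zero]
  simp

theorem le_sum_add_log_of_levels (hq : 3 ≤ q) (ha0 : a 0 ≤ 1) (hlast : a (d + 1) = 0)
    (hsum : ∑ j ∈ range (d + 1), a j = critSize q d)
    (hdown : ∀ j < d, q * a j ≤ a (j + 1) + c (j + 1))
    (hup : ∀ j < d, a (j + 1) ≤ q * (a j + c j)) :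
    d ≤ ∑ j ∈ range (d + 1), c j + Nat.log q (2 * d * q) := by
  refine le_sum_add_log (e := jump q a) (by omega) (walk_ne_zero hq) walk_succ
    (fun j hj => ?_) (fun j hj => ?_) ?_ (sum_walk hsum) ?_
  · have := hup j hj; simp only [jump]; linarith
  · have := hdown j hj; simp only [jump]; linarith
  · simp only [jump, hlast, Nat.cast_zero, zero_sub, neg_nonpos]; positivity
  · have : (a 0 : ℤ) ≤ 1 := by exact_mod_cast ha0
    simp only [walk, pow_zero]
    rw [abs_le]; constructor <;> nlinarith

end QaryLevels

lemma mem_union_vertexBorder_of_adj {V : Type*} {G : SimpleGraph V} {S : Set V} {u v : V}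
    (h : G.Adj u v) (hu : u ∈ S) : v ∈ S ∪ vertexBorder G S := by
  by_cases hv : v ∈ S
  · exact Or.inl hv
  · exact Or.inr ⟨hv, u, hu, h⟩

lemma le_isoPeak {V : Type*} [Finite V] {G : SimpleGraph V} {s b : ℕ} (hs : s ≤ Nat.card V)
    (h : ∀ S : Set V, S.ncard = s → b ≤ (vertexBorder G S).ncard) : b ≤ isoPeak G := by
  obtain ⟨S, -, hS⟩ := Set.exists_subset_card_eq (s := (Set.univ : Set V)) (n := s)
    (by rwa [Set.ncard_univ])
  calc b ≤ isoProfile G s := le_csInf ⟨_, S, hS, rfl⟩ (by rintro _ ⟨T, hT, rfl⟩; exact h T hT)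
    _ ≤ isoPeak G := le_csSup ((Set.finite_Icc 0 _).image _).bddAbove ⟨s, ⟨Nat.zero_le _, hs⟩, rfl⟩

namespace QV

variable {q d j : ℕ}

lemma level_eq_empty (hj : d < j) : level q d j = ∅ :=
  Set.eq_empty_of_forall_notMem fun w (hw : w.val.length = j) => by
    have := w.2
    omega

lemma ncard_inter_level_zero_le_one (S : Set (QV q d)) : (S ∩ level q d 0).ncard ≤ 1 :=
  (Set.ncard_le_one (Set.toFinite _)).2 fun u hu v hv => Subtype.ext <| by
    rw [List.length_eq_zero_iff.1 hu.2, List.length_eq_zero_iff.1 hv.2]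

lemma ncard_level (hj : j ≤ d) : (level q d j).ncard = q ^ j := by
  let e : level q d j ≃ List.Vector (Fin q) j :=
    { toFun := fun w => ⟨w.1.1, w.2⟩
      invFun := fun v => ⟨⟨v.1, by simpa [v.2] using hj⟩, v.2⟩
      left_inv := fun _ => rfl
      right_inv := fun _ => rfl }
  rw [← Nat.card_coe_set_eq, Nat.card_congr e, Nat.card_eq_fintype_card, card_vector,
    Fintype.card_fin]

lemma ncard_eq_sum_ncard_inter_level (X : Set (QV q d)) :
    X.ncard = ∑ j ∈ range (d + 1), (X ∩ level q d j).ncard := by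
  classical
  rw [Set.ncard_eq_toFinset_card X,
    card_eq_sum_card_fiberwise (f := fun w : QV q d => w.val.length) (t := range (d + 1))
      fun w _ => by simpa [Nat.lt_succ_iff] using w.2]
  refine sum_congr rfl fun j _ => ?_
  rw [Set.ncard_eq_toFinset_card (X ∩ level q d j)]
  congr 1
  ext
  simp [level]

lemma card_eq_sum_pow : Nat.card (QV q d) = ∑ j ∈ range (d + 1), q ^ j := by
  rw [← Set.ncard_univ, ncard_eq_sum_ncard_inter_level]
  exact sum_congr rfl fun j hj => by
    rw [Set.univ_inter, ncard_level (Nat.lt_succ_iff.1 (mem_range.1 hj))]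

lemma critSize_le_card (hq : 2 ≤ q) : QaryLevels.critSize q d ≤ Nat.card (QV q d) := by
  rw [card_eq_sum_pow]
  refine sum_le_sum fun j _ => ?_
  obtain ⟨x, rfl⟩ : ∃ x, q = x + 1 := ⟨q - 1, by omega⟩
  have := geom_sum_mul_add x j
  nlinarith [Nat.le_mul_of_pos_right (∑ i ∈ range j, (x + 1) ^ i) (by omega : 0 < x)]

/-- On leaves, where there is no room to append, this is the identity. -/
def snoc (p : QV q d × Fin q) : QV q d :=
  if h : p.1.val.length < d then ⟨p.1.val ++ [p.2], by simp; omega⟩ else p.1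

lemma snoc_val {p : QV q d × Fin q} (h : p.1.val.length < d) :
    (snoc p).val = p.1.val ++ [p.2] := by
  simp [snoc, h]

lemma adj_snoc {u : QV q d} (h : u.val.length < d) (i : Fin q) :
    (qTree q d).Adj u (snoc (u, i)) :=
  Or.inl ⟨i, snoc_val h⟩

lemma snoc_mem_level {u : QV q d} (hj : j < d) (hu : u ∈ level q d j) (i : Fin q) :
    snoc (u, i) ∈ level q d (j + 1) := by
  have hu : u.val.length = j := hu
  show (snoc (u, i)).val.length = j + 1
  rw [snoc_val (show u.val.length < d by omega)]
  simp [hu]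

lemma injOn_snoc (hj : j < d) : Set.InjOn snoc (level q d j ×ˢ (Set.univ : Set (Fin q))) := by
  rintro ⟨u, i⟩ ⟨hu, -⟩ ⟨v, k⟩ ⟨hv, -⟩ h
  have hu : u.val.length = j := hu
  have hv : v.val.length = j := hv
  have h' := congrArg Subtype.val h
  rw [snoc_val (by simp; omega), snoc_val (by simp; omega)] at h'
  obtain ⟨huv, hik⟩ := List.append_inj' h' rfl
  simp only [List.cons.injEq, and_true] at hik
  exact Prod.ext (Subtype.ext huv) hik

lemma level_succ_subset_image_snoc (hj : j < d) :
    level q d (j + 1) ⊆ snoc '' (level q d j ×ˢ Set.univ) := by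
  intro v hv
  have hv : v.val.length = j + 1 := hv
  obtain ⟨l, x, hl⟩ : ∃ l x, v.val = l ++ [x] := by
    rcases List.eq_nil_or_concat v.val with h | h
    · simp [h] at hv
    · simpa using h
  have hlen : l.length = j := by simpa [hl] using hv
  refine ⟨(⟨l, by omega⟩, x), ⟨hlen, trivial⟩, Subtype.ext ?_⟩
  rw [snoc_val (by simp; omega), hl]

lemma ncard_image_snoc {A : Set (QV q d)} (hA : A ⊆ level q d j) (hj : j < d) :
    (snoc '' (A ×ˢ (Set.univ : Set (Fin q)))).ncard = q * A.ncard := by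
  rw [((injOn_snoc hj).mono (Set.prod_mono hA le_rfl)).ncard_image, Set.ncard_prod,
    Set.ncard_univ, Nat.card_fin, mul_comm]

variable (S : Set (QV q d))

lemma mul_ncard_inter_level_le (hj : j < d) :
    q * (S ∩ level q d j).ncard ≤
      ((S ∪ vertexBorder (qTree q d) S) ∩ level q d (j + 1)).ncard := by
  rw [← ncard_image_snoc Set.inter_subset_right hj]
  refine Set.ncard_le_ncard ?_ (Set.toFinite _)
  rintro _ ⟨⟨u, i⟩, ⟨hu, -⟩, rfl⟩
  have hlen : u.val.length = j := hu.2
  have hadj := adj_snoc (show u.val.length < d by omega) i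
  exact ⟨mem_union_vertexBorder_of_adj hadj hu.1, snoc_mem_level hj hu.2 i⟩

lemma ncard_inter_level_succ_le (hj : j < d) :
    (S ∩ level q d (j + 1)).ncard ≤
      q * ((S ∪ vertexBorder (qTree q d) S) ∩ level q d j).ncard := by
  rw [← ncard_image_snoc Set.inter_subset_right hj]
  refine Set.ncard_le_ncard ?_ (Set.toFinite _)
  rintro v ⟨hvS, hv⟩
  obtain ⟨⟨u, i⟩, ⟨hu, -⟩, rfl⟩ := level_succ_subset_image_snoc hj hv
  have hlen : u.val.length = j := hu
  have hadj := adj_snoc (show u.val.length < d by omega) i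
  exact ⟨(u, i), ⟨⟨mem_union_vertexBorder_of_adj hadj.symm hvS, hu⟩, trivial⟩, rfl⟩

theorem le_ncard_vertexBorder_add_log (hq : 3 ≤ q) (hS : S.ncard = QaryLevels.critSize q d) :
    d ≤ (vertexBorder (qTree q d) S).ncard + Nat.log q (2 * d * q) := by
  set B := vertexBorder (qTree q d) S
  have hunion : ∀ j, ((S ∪ B) ∩ level q d j).ncard ≤
      (S ∩ level q d j).ncard + (B ∩ level q d j).ncard := fun j => by
    rw [Set.union_inter_distrib_right]; exact Set.ncard_union_le _ _
  rw [ncard_eq_sum_ncard_inter_level B]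
  refine QaryLevels.le_sum_add_log_of_levels hq (ncard_inter_level_zero_le_one S)
    (by rw [level_eq_empty (by omega), Set.inter_empty, Set.ncard_empty])
    (by rw [← ncard_eq_sum_ncard_inter_level, hS])
    (fun j hj => (mul_ncard_inter_level_le S hj).trans (hunion _))
    (fun j hj => (ncard_inter_level_succ_le S hj).trans (Nat.mul_le_mul_left _ (hunion _)))

end QV

theorem qary_tree_iso_peak_lower_q34 (q d : ℕ) (hq : q = 3 ∨ q = 4) (hd : 1 ≤ d) :
    (d : ℝ) - Real.logb q d - (Real.logb q 2 + 1) ≤ (isoPeak (qTree q d) : ℝ) := by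
  have hq3 : 3 ≤ q := by omega
  have hpeak : d - Nat.log q (2 * d * q) ≤ isoPeak (qTree q d) :=
    le_isoPeak (QV.critSize_le_card (by omega)) fun S hS =>
      Nat.sub_le_iff_le_add.2 (QV.le_ncard_vertexBorder_add_log S hq3 hS)
  have hq1 : (1 : ℝ) < q := by exact_mod_cast (by omega : 1 < q)
  have hlog : (Nat.log q (2 * d * q) : ℝ) ≤ Real.logb q 2 + Real.logb q d + 1 :=
    calc (Nat.log q (2 * d * q) : ℝ) ≤ Real.logb q (2 * d * q : ℕ) := Real.natLog_le_logb _ _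
      _ = Real.logb q 2 + Real.logb q d + 1 := by
        have hd0 : (d : ℝ) ≠ 0 := by positivity
        push_cast
        rw [Real.logb_mul (by positivity) (by positivity), Real.logb_mul (by norm_num) hd0,
          Real.logb_self_eq_one hq1]
  have hsub : (d : ℝ) ≤ ((d - Nat.log q (2 * d * q) : ℕ) : ℝ) + Nat.log q (2 * d * q) := by
    exact_mod_cast le_tsub_add
  have hpeakR : ((d - Nat.log q (2 * d * q) : ℕ) : ℝ) ≤ isoPeak (qTree q d) := by
    exact_mod_cast hpeak
  linarith
end

section
/- Let T be the complete q-ary tree of depth d (q ≥ 2, d ≥ 1), let S ⊆ V(T), let u, v be vertices in level L_i that are swappable in S, and suppose that every level j < i of S is left-ordered. Then the treeswap S' of S between u and v is a compression of S; that is, |S'| = |S| and |δ(S')| ≤ |δ(S)|. -/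
open scoped Classical

/-!
The map `σ = swapAt u v` exchanges the subtrees below `u` and `v`; it is an involution and the
treeswap is `σ⁻¹(S)`, so the sizes agree. It maps every edge of the tree to an edge, except the
two joining `u` and `v` to their parents `pu`, `pv` (which it fixes), so it maps `δ(σ⁻¹ S)`
injectively into `δ(S)` once those two edges are dealt with. For them, swappability (`u ∉ S`,
and `v ∈ S` or `v` has a child in `S`) is combined with the left-orderedness of the level of
`pu` and `pv`, which are equal or `pu` is left of `pv`: if `pu ∉ S` then `pv ∉ S`, and if
moreover `pv` has a child in `S` then so does `pu`.
-/

theorem Function.Involutive.ncard_preimage {α : Type*} {f : α → α} (hf : Function.Involutive f)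
    (s : Set α) : (f ⁻¹' s).ncard = s.ncard :=
  Set.ncard_preimage_of_injective_subset_range hf.injective (by simp [hf.surjective.range_eq])

theorem List.eq_or_lex_of_lex_concat {α : Type*} {r : α → α → Prop} :
    ∀ {p p' : List α} {a b : α}, p.length = p'.length →
      List.Lex r (p ++ [a]) (p' ++ [b]) → p = p' ∨ List.Lex r p p'
  | [], [], _, _, _, _ => Or.inl rfl
  | c :: t, c' :: t', a, b, hlen, h => by
    rcases List.cons_lex_cons_iff.mp h with hc | ⟨rfl, ht⟩
    · exact Or.inr (List.Lex.rel hc)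
    · rcases List.eq_or_lex_of_lex_concat (by simpa using hlen) ht with rfl | hlex
      · exact Or.inl rfl
      · exact Or.inr (List.Lex.cons hlex)

namespace QV

variable {q d : ℕ}

theorem qTree_adj_iff {x y : QV q d} : (qTree q d).Adj x y ↔ IsChildOf y x ∨ IsChildOf x y :=
  Iff.rfl

theorem IsChildOf.length_eq {w x : QV q d} (h : IsChildOf w x) :
    w.val.length = x.val.length + 1 := by
  obtain ⟨a, ha⟩ := h
  simp [ha]

theorem IsChildOf.unique {w x y : QV q d} (hx : IsChildOf w x) (hy : IsChildOf w y) : x = y := by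
  obtain ⟨a, ha⟩ := hx
  obtain ⟨b, hb⟩ := hy
  exact Subtype.ext (List.append_inj_left' (ha.symm.trans hb) rfl)

theorem IsChildOf.prefix_or_eq {w x u : QV q d} (h : IsChildOf w x) (hu : u.val <+: w.val) :
    u.val <+: x.val ∨ u = w := by
  obtain ⟨a, ha⟩ := h
  rw [ha, List.prefix_concat_iff, ← ha] at hu
  exact hu.symm.imp_right Subtype.ext

theorem exists_isChildOf {u : QV q d} (hu : u.val ≠ []) : ∃ p, IsChildOf u p :=
  ⟨⟨u.val.dropLast, by simpa using (Nat.sub_le _ 1).trans u.prop⟩,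
    u.val.getLast hu, (List.dropLast_append_getLast hu).symm⟩

theorem LeftOf.ne {u v : QV q d} (h : LeftOf u v) : u ≠ v := by
  rintro rfl
  exact List.lt_irrefl _ h.2

theorem LeftOf.right_ne_nil {u v : QV q d} (h : LeftOf u v) : v.val ≠ [] :=
  fun hv => List.not_lex_nil (hv ▸ h.2)

theorem LeftOf.left_ne_nil {u v : QV q d} (h : LeftOf u v) : u.val ≠ [] :=
  List.ne_nil_of_length_pos (h.1 ▸ List.length_pos_of_ne_nil h.right_ne_nil)

theorem LeftOf.parent {u v pu pv : QV q d} (h : LeftOf u v) (hu : IsChildOf u pu)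
    (hv : IsChildOf v pv) : pu = pv ∨ LeftOf pu pv := by
  obtain ⟨a, ha⟩ := hu
  obtain ⟨b, hb⟩ := hv
  have hlen : pu.val.length = pv.val.length := by
    simpa [ha, hb] using h.1
  have hlex : List.Lex (· < ·) (pu.val ++ [a]) (pv.val ++ [b]) := ha ▸ hb ▸ h.2
  exact (List.eq_or_lex_of_lex_concat hlen hlex).imp Subtype.ext fun hlex => ⟨hlen, hlex⟩

section LeftOrdered

variable {S : Set (QV q d)} {a b : QV q d}

theorem LevelLeftOrdered.not_mem_of_not_mem (hS : LevelLeftOrdered S a.val.length)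
    (hab : a = b ∨ LeftOf a b) (ha : a ∉ S) : b ∉ S := by
  rcases hab with rfl | hab
  · exact ha
  · exact fun hb => hS a b rfl ⟨hab, Or.inl ⟨ha, hb⟩⟩

theorem LevelLeftOrdered.exists_child_mem (hS : LevelLeftOrdered S a.val.length)
    (hab : a = b ∨ LeftOf a b) (ha : a ∉ S) (hb : ∃ c, IsChildOf c b ∧ c ∈ S) :
    ∃ c, IsChildOf c a ∧ c ∈ S := by
  rcases hab with rfl | hab
  · exact hb
  · by_contra hno
    push Not at hno
    exact hS a b rfl ⟨hab, Or.inr ⟨ha, hS.not_mem_of_not_mem (Or.inr hab) ha, hno, hb⟩⟩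

end LeftOrdered

section SwapAt

variable {u v w x : QV q d}

theorem swapAt_val_of_eq_left_append (hlen : u.val.length = v.val.length) {t : List (Fin q)}
    (hw : w.val = u.val ++ t) : (swapAt u v w).val = v.val ++ t := by
  have hd : (v.val ++ w.val.drop u.val.length).length ≤ d := by
    have := w.prop
    simp only [hw, List.length_append, List.drop_left] at this ⊢
    omega
  rw [show swapAt u v w = ⟨_, hd⟩ from dif_pos ⟨⟨t, hw.symm⟩, hd⟩]
  show v.val ++ w.val.drop u.val.length = v.val ++ t
  rw [hw, List.drop_left]

theorem swapAt_val_of_eq_right_append (hlen : u.val.length = v.val.length) (hne : u ≠ v)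
    {t : List (Fin q)} (hw : w.val = v.val ++ t) : (swapAt u v w).val = u.val ++ t := by
  have hd : (u.val ++ w.val.drop v.val.length).length ≤ d := by
    have := w.prop
    simp only [hw, List.length_append, List.drop_left] at this ⊢
    omega
  have hu : ¬ u.val <+: w.val := fun hu => hne <| Subtype.ext <|
    (List.prefix_of_prefix_length_le hu ⟨t, hw.symm⟩ hlen.le).eq_of_length hlen
  have hσw : swapAt u v w = ⟨_, hd⟩ :=
    (dif_neg fun h => hu h.1).trans (dif_pos ⟨⟨t, hw.symm⟩, hd⟩)
  rw [hσw]
  show u.val ++ w.val.drop v.val.length = u.val ++ t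
  rw [hw, List.drop_left]

theorem swapAt_of_not_prefix (hu : ¬ u.val <+: w.val) (hv : ¬ v.val <+: w.val) :
    swapAt u v w = w :=
  (dif_neg fun h => hu h.1).trans (dif_neg fun h => hv h.1)

theorem swapAt_of_length_lt (hlen : u.val.length = v.val.length)
    (hw : w.val.length < u.val.length) : swapAt u v w = w :=
  swapAt_of_not_prefix (fun h => absurd h.length_le (by omega))
    (fun h => absurd h.length_le (by omega))

theorem swapAt_left (hlen : u.val.length = v.val.length) : swapAt u v u = v :=
  Subtype.ext (by simpa using swapAt_val_of_eq_left_append (w := u) hlen (List.append_nil _).symm)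

theorem swapAt_right (hlen : u.val.length = v.val.length) (hne : u ≠ v) : swapAt u v v = u :=
  Subtype.ext
    (by simpa using swapAt_val_of_eq_right_append (w := v) hlen hne (List.append_nil _).symm)

theorem swapAt_involutive (hlen : u.val.length = v.val.length) (hne : u ≠ v) :
    Function.Involutive (swapAt u v) := by
  intro w
  by_cases hu : u.val <+: w.val
  · obtain ⟨t, ht⟩ := hu
    have hσw := swapAt_val_of_eq_left_append (v := v) hlen ht.symm
    exact Subtype.ext ((swapAt_val_of_eq_right_append hlen hne hσw).trans ht)
  by_cases hv : v.val <+: w.val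
  · obtain ⟨t, ht⟩ := hv
    have hσw := swapAt_val_of_eq_right_append hlen hne ht.symm
    exact Subtype.ext ((swapAt_val_of_eq_left_append hlen hσw).trans ht)
  rw [swapAt_of_not_prefix hu hv, swapAt_of_not_prefix hu hv]

theorem IsChildOf.swapAt (hlen : u.val.length = v.val.length) (hne : u ≠ v)
    (h : IsChildOf w x) (hwu : w ≠ u) (hwv : w ≠ v) :
    IsChildOf (swapAt u v w) (swapAt u v x) := by
  have ⟨a, ha⟩ := h
  by_cases hu : u.val <+: x.val
  · obtain ⟨t, ht⟩ := hu
    have hwt : w.val = u.val ++ (t ++ [a]) := by rw [ha, ← ht, List.append_assoc]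
    refine ⟨a, ?_⟩
    rw [swapAt_val_of_eq_left_append hlen hwt, swapAt_val_of_eq_left_append hlen ht.symm,
      List.append_assoc]
  by_cases hv : v.val <+: x.val
  · obtain ⟨t, ht⟩ := hv
    have hwt : w.val = v.val ++ (t ++ [a]) := by rw [ha, ← ht, List.append_assoc]
    refine ⟨a, ?_⟩
    rw [swapAt_val_of_eq_right_append hlen hne hwt, swapAt_val_of_eq_right_append hlen hne ht.symm,
      List.append_assoc]
  have hwu' : ¬ u.val <+: w.val := fun hw => (h.prefix_or_eq hw).elim hu hwu.symm
  have hwv' : ¬ v.val <+: w.val := fun hw => (h.prefix_or_eq hw).elim hv hwv.symm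
  rwa [swapAt_of_not_prefix hu hv, swapAt_of_not_prefix hwu' hwv']

end SwapAt

theorem swapAt_mem_vertexBorder {S : Set (QV q d)} {u v w : QV q d} (hsw : Swappable S u v)
    (hlo : ∀ j < u.val.length, LevelLeftOrdered S j)
    (hw : w ∈ vertexBorder (qTree q d) (treeswap S u v)) :
    swapAt u v w ∈ vertexBorder (qTree q d) S := by
  obtain ⟨hlr, hcase⟩ := hsw
  have hlen := hlr.1
  obtain ⟨hwS, x, hxS, hxw⟩ := hw
  change swapAt u v w ∉ S at hwS
  change swapAt u v x ∈ S at hxS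
  refine ⟨hwS, ?_⟩
  have hne := hlr.ne
  have huS : u ∉ S := by rcases hcase with ⟨h, -⟩ | ⟨h, -⟩ <;> exact h
  obtain ⟨pu, hpu⟩ := exists_isChildOf hlr.left_ne_nil
  obtain ⟨pv, hpv⟩ := exists_isChildOf hlr.right_ne_nil
  have hpar := hlr.parent hpu hpv
  have hloP : LevelLeftOrdered S pu.val.length := hlo _ (by simp [hpu.length_eq])
  have hfix {p : QV q d} (hp : IsChildOf u p ∨ IsChildOf v p) : swapAt u v p = p :=
    swapAt_of_length_lt hlen (by rcases hp with hp | hp <;> have := hp.length_eq <;> omega)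
  rcases qTree_adj_iff.mp hxw with hwx | hxw
  · by_cases hwu : w = u
    · subst w
      rw [swapAt_left hlen] at hwS ⊢
      obtain ⟨c, hc, hcS⟩ : ∃ c, IsChildOf c v ∧ c ∈ S := by tauto
      exact ⟨c, hcS, Or.inr hc⟩
    by_cases hwv : w = v
    · subst w
      obtain rfl := hwx.unique hpv
      rw [hfix (Or.inr hwx)] at hxS
      rw [swapAt_right hlen hne]
      exact ⟨pu, not_not.mp fun h => hloP.not_mem_of_not_mem hpar h hxS, Or.inl hpu⟩
    exact ⟨_, hxS, Or.inl (hwx.swapAt hlen hne hwu hwv)⟩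
  · by_cases hxu : x = u
    · subst x
      obtain rfl := hxw.unique hpu
      rw [swapAt_left hlen] at hxS
      rw [hfix (Or.inl hxw)] at hwS ⊢
      obtain ⟨c, hc, hcS⟩ := hloP.exists_child_mem hpar hwS ⟨v, hpv, hxS⟩
      exact ⟨c, hcS, Or.inr hc⟩
    by_cases hxv : x = v
    · subst x
      exact absurd (swapAt_right hlen hne ▸ hxS) huS
    exact ⟨_, hxS, Or.inr (hxw.swapAt hlen hne hxu hxv)⟩

end QV

theorem treeswap_is_compression_general (q d : ℕ)
    (S : Set (QV q d)) (u v : QV q d) (i : ℕ)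
    (hui : u ∈ QV.level q d i)
    (hsw : QV.Swappable S u v)
    (hlo : ∀ j < i, QV.LevelLeftOrdered S j) :
    (QV.treeswap S u v).ncard = S.ncard ∧
    (vertexBorder (qTree q d) (QV.treeswap S u v)).ncard ≤
      (vertexBorder (qTree q d) S).ncard := by
  have hσ : Function.Involutive (QV.swapAt u v) := QV.swapAt_involutive hsw.1.1 hsw.1.ne
  refine ⟨hσ.ncard_preimage S, ?_⟩
  have hlo' : ∀ j < u.val.length, QV.LevelLeftOrdered S j := fun j hj => hlo j (hui ▸ hj)
  exact Set.ncard_le_ncard_of_injOn (QV.swapAt u v)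
    (fun w hw => QV.swapAt_mem_vertexBorder hsw hlo' hw) hσ.injective.injOn (Set.toFinite _)

theorem treeswap_is_compression (q d : ℕ) (hq : 2 ≤ q) (hd : 1 ≤ d)
    (S : Set (QV q d)) (u v : QV q d) (i : ℕ)
    (hui : u ∈ QV.level q d i) (hvi : v ∈ QV.level q d i)
    (hsw : QV.Swappable S u v)
    (hlo : ∀ j < i, QV.LevelLeftOrdered S j) :
    (QV.treeswap S u v).ncard = S.ncard ∧
    (vertexBorder (qTree q d) (QV.treeswap S u v)).ncard ≤
      (vertexBorder (qTree q d) S).ncard :=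
  treeswap_is_compression_general q d S u v i hui hsw hlo
end

section
/- Let T be the complete q-ary tree of depth d (q ≥ 2, d ≥ 1). If S ⊆ V(T) is such that no U ⊆ V(T) satisfies U < S, then S is left-ordered. -/
open scoped Classical

/-
A swappable pair `u, v` of `S` always yields a pair `u' ∉ S`, `v' ∈ S` in one level with `u'`
to the left of `v'`: either `u, v` themselves, or a child `v'` of `v` in `S` together with the
child `u'` of `u` on the same branch. Exchanging `v'` for `u'` keeps every level count and
first differs from `S` at `u'`, so it gives a set below `S`.
-/

theorem List.Lex.append_of_length_eq {α : Type*} {r : α → α → Prop} {l₁ l₂ : List α}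
    (h : List.Lex r l₁ l₂) (hlen : l₁.length = l₂.length) (s t : List α) :
    List.Lex r (l₁ ++ s) (l₂ ++ t) := by
  induction h with
  | nil => simp at hlen
  | cons _ ih => exact .cons (ih (by simpa using hlen))
  | rel h => exact .rel h

theorem Set.ncard_insert_diff_inter {α : Type*} {S L : Set α} {u v : α} (huS : u ∉ S)
    (hvS : v ∈ S) (huv : u ∈ L ↔ v ∈ L) :
    (insert u (S \ {v}) ∩ L).ncard = (S ∩ L).ncard := by
  by_cases hv : v ∈ L
  · rw [Set.insert_inter_of_mem (huv.2 hv), ← Set.inter_sdiff_right_comm]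
    exact Set.ncard_exchange (fun h => huS h.1) ⟨hvS, hv⟩
  · rw [Set.insert_inter_of_notMem (mt huv.1 hv), ← Set.inter_sdiff_right_comm,
      Set.sdiff_singleton_eq_self (fun h => hv h.2)]

namespace QV

variable {q d : ℕ} {u v w : QV q d}

theorem Precedes.asymm (h : Precedes u v) : ¬ Precedes v u := by
  rcases h with h | ⟨hlen, hlex⟩ <;> rintro (h' | ⟨hlen', hlex'⟩)
  all_goals first | omega | exact List.lt_asymm hlex hlex'

theorem Precedes.irrefl (u : QV q d) : ¬ Precedes u u := fun h => h.asymm h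

theorem LeftOf.precedes (h : LeftOf u v) : Precedes u v := Or.inr h

theorem LeftOf.exists_child (huv : LeftOf u v) (hw : IsChildOf w v) :
    ∃ u', IsChildOf u' u ∧ LeftOf u' w := by
  obtain ⟨a, ha⟩ := hw
  have hlen : (u.val ++ [a]).length ≤ d := by
    simpa [huv.1, ha] using w.2
  refine ⟨⟨u.val ++ [a], hlen⟩, ⟨a, rfl⟩, ?_, ?_⟩
  · simp [ha, huv.1]
  · rw [ha]
    exact huv.2.append_of_length_eq huv.1 _ _

theorem setPrec_insert_diff {S : Set (QV q d)} (huS : u ∉ S) (hvS : v ∈ S) (huv : LeftOf u v) :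
    SetPrec (insert u (S \ {v})) S := by
  refine ⟨fun i => Set.ncard_insert_diff_inter huS hvS ?_, u, Set.mem_insert u _, huS,
    fun w hw => ?_⟩
  · simp only [level, Set.mem_ofPred_eq, huv.1]
  have hwu : w ≠ u := by rintro rfl; exact Precedes.irrefl w hw
  have hwv : w ≠ v := by rintro rfl; exact huv.precedes.asymm hw
  simp [hwu, hwv]

end QV

theorem minimal_in_order_is_left_ordered_general (q d : ℕ)
    (S : Set (QV q d)) (h : ∀ U : Set (QV q d), ¬ QV.SetPrec U S) :
    QV.LeftOrdered S := by
  rintro - u v - ⟨huv, ⟨huS, hvS⟩ | ⟨-, -, hchildren, w, hwv, hwS⟩⟩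
  · exact h _ (QV.setPrec_insert_diff huS hvS huv)
  · obtain ⟨u', hu'u, hu'w⟩ := huv.exists_child hwv
    exact h _ (QV.setPrec_insert_diff (hchildren u' hu'u) hwS hu'w)

theorem minimal_in_order_is_left_ordered (q d : ℕ) (hq : 2 ≤ q) (hd : 1 ≤ d)
    (S : Set (QV q d)) (h : ∀ U : Set (QV q d), ¬ QV.SetPrec U S) :
    QV.LeftOrdered S :=
  minimal_in_order_is_left_ordered_general q d S h
end
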